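/- arXiv:cs/0609049 — 3 statements merged into one kernel-verified Lean document; each statement's English description precedes it below -/
import Mathlib

section
/- Let l : A × D → [0, l_max] be a bounded loss function, let m ≤ n, K = ⌈n/m⌉ − 1, and let F_m be a set of λ scandictors for V_m. Partition V_n into K² full m×m blocks plus 2K+1 boundary blocks, scanned in a fixed raster order of blocks; each scandictor j ∈ F_m is applied restarted on each full block, and every scandictor (as well as the algorithm) is charged the maximal loss l_max per site on the boundary blocks. The block exponential-weighting algorithm with parameter η = 2√(2 log λ) / (m·l_max·(n+m)) selects, after scanning i blocks and independently of previous selections, scandictor j with probability proportional to exp(−η·L_{j,i}), where L_{j,i} is the cumulative loss scandictor j would have incurred on the first i blocks, and applies it to block i+1. Then for every individual array x ∈ A^{V_n}, the expected cumulative loss L̄_alg(x) of the algorithm (expectation over its internal randomization) satisfies L̄_alg(x) − min_{j ∈ F_m} Σ_i L_j(x^i) ≤ m(n+m)·√(log λ)·l_max/√2, where Σ_i L_j(x^i) = L_min(x) when minimized is the cumulative loss of the best scandictor in F_m operating block-wise on x. -/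
open MeasureTheory Filter Real

namespace Scandiction

variable {A D B : Type*}

def visits (Ψ : ∀ t : ℕ, (Fin t → A) → B) (x : B → A) : ℕ → B
  | t => Ψ t fun i : Fin t => x (visits Ψ x i)
  decreasing_by exact i.isLt

def IsValidScan [Fintype B] (Ψ : ∀ t : ℕ, (Fin t → A) → B) : Prop :=
  ∀ x : B → A, Function.Bijective fun t : Fin (Fintype.card B) => visits Ψ x t.1

noncomputable def cumLoss [Fintype B] (l : A → D → ℝ)
    (Ψ : ∀ t : ℕ, (Fin t → A) → B) (F : ∀ t : ℕ, (Fin t → A) → D) (x : B → A) : ℝ :=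
  ∑ t : Fin (Fintype.card B),
    l (x (visits Ψ x t.1)) (F t.1 fun i : Fin t.1 => x (visits Ψ x i.1))

structure Scandictor (A D B : Type*) [Fintype B] where
  scan : ∀ t : ℕ, (Fin t → A) → B
  pred : ∀ t : ℕ, (Fin t → A) → D
  valid : IsValidScan scan

noncomputable def sLoss [Fintype B] (l : A → D → ℝ) (S : Scandictor A D B) (x : B → A) : ℝ :=
  cumLoss l S.scan S.pred x

section ExpWeighting

variable {J : Type*}

/-- Cumulative loss of expert `j` on the first `i` blocks, given per-block losses `bl`. -/
noncomputable def cumBlockLoss (bl : J → ℕ → ℝ) (j : J) (i : ℕ) : ℝ :=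
  ∑ a ∈ Finset.range i, bl j a

/-- The exponential-weighting probability assigned to expert `j` after `i` blocks. -/
noncomputable def expWeight [Fintype J] (η : ℝ) (bl : J → ℕ → ℝ) (i : ℕ) (j : J) : ℝ :=
  Real.exp (-η * cumBlockLoss bl j i) / ∑ j' : J, Real.exp (-η * cumBlockLoss bl j' i)

/-- The parameter `η = 2√(2 log λ) / (m · l_max · (n+m))`. -/
noncomputable def ewEta (n m : ℕ) (lmax : ℝ) (lam : ℕ) : ℝ :=
  2 * Real.sqrt (2 * Real.log lam) / ((m : ℝ) * lmax * ((n : ℝ) + (m : ℝ)))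

/-- `K = ⌈n/m⌉ - 1`. -/
def Kq (n m : ℕ) : ℕ := (n + m - 1) / m - 1

/-- Value of the array `x` at site `(p,q)` (arbitrary value off the array). -/
noncomputable def siteVal [Nonempty A] {n : ℕ} (x : Fin n × Fin n → A) (p q : ℕ) : A :=
  if h : p < n ∧ q < n then x (⟨p, h.1⟩, ⟨q, h.2⟩) else Classical.arbitrary A

/-- The `a`-th full `m × m` block of the `n × n` array `x`, the `K × K` full blocks being
indexed in raster order. -/
noncomputable def blockImage [Nonempty A] (n m : ℕ) (x : Fin n × Fin n → A) (a : ℕ) :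
    Fin m × Fin m → A :=
  fun p => siteVal x ((a / Kq n m) * m + p.1.1) ((a % Kq n m) * m + p.2.1)

/-- Per-block loss of expert `j` (a scandictor for `V_m`, restarted on each full block). -/
noncomputable def blockLoss [Nonempty A] (l : A → D → ℝ) (n m : ℕ)
    (S : J → Scandictor A D (Fin m × Fin m)) (x : Fin n × Fin n → A) (j : J) (a : ℕ) : ℝ :=
  sLoss l (S j) (blockImage n m x a)

/-- Total loss charged on the `2K+1` boundary blocks: `l_max` per site. -/
noncomputable def boundaryLoss (n m : ℕ) (lmax : ℝ) : ℝ :=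
  ((n * n - Kq n m * Kq n m * (m * m) : ℕ) : ℝ) * lmax

/-- Expected cumulative loss of the block exponential-weighting algorithm over `T` blocks
(expectation over its internal randomization). -/
noncomputable def ewExpectedLoss [Fintype J] (η : ℝ) (bl : J → ℕ → ℝ) (T : ℕ) : ℝ :=
  ∑ i ∈ Finset.range T, ∑ j : J, expWeight η bl i j * bl j i

/-- Realized cumulative loss of the algorithm over `T` blocks under the selections `ω`. -/
noncomputable def ewRealizedLoss (bl : J → ℕ → ℝ) (T : ℕ) (ω : ℕ → J) : ℝ :=
  ∑ i ∈ Finset.range T, bl (ω i) i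

/-- Probability that the algorithm's independent randomized selections realize `ω`. -/
noncomputable def selProb [Fintype J] (η : ℝ) (bl : J → ℕ → ℝ) (T : ℕ) (ω : Fin T → J) : ℝ :=
  ∏ i : Fin T, expWeight η bl i.1 (ω i)

end ExpWeighting


section AuxEW

lemma aux_gpos {p : ℝ} (hp : 0 ≤ p) (hp1 : p ≤ 1) (u : ℝ) : 0 < 1 - p + p * Real.exp u := by
  rcases eq_or_lt_of_le hp1 with h | h
  · subst h; simpa using Real.exp_pos u
  · nlinarith [Real.exp_pos u, mul_nonneg hp (Real.exp_pos u).le]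

lemma aux_bernoulli_mgf {p : ℝ} (hp : 0 ≤ p) (hp1 : p ≤ 1) (u : ℝ) :
    Real.log (1 - p + p * Real.exp u) ≤ p * u + u ^ 2 / 8 := by
  set g : ℝ → ℝ := fun u => 1 - p + p * Real.exp u with hg
  have hgpos : ∀ u, 0 < g u := fun u => aux_gpos hp hp1 u
  have hgd : ∀ u, HasDerivAt g (p * Real.exp u) u := fun u => by
    exact ((Real.hasDerivAt_exp u).const_mul p).const_add (1 - p)
  set f : ℝ → ℝ := fun u => p * u + u ^ 2 / 8 - Real.log (g u) with hf
  set f1 : ℝ → ℝ := fun u => p + u / 4 - p * Real.exp u / g u with hf1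
  have hfd : ∀ u, HasDerivAt f (f1 u) u := by
    intro u
    have h1 : HasDerivAt (fun u : ℝ => p * u + u ^ 2 / 8) (p + u / 4) u := by
      have h2 : HasDerivAt (fun u : ℝ => p * u) p u := by
        simpa using (hasDerivAt_id u).const_mul p
      exact (h2.add ((hasDerivAt_pow 2 u).div_const 8)).congr_deriv (by ring)
    exact h1.sub ((hgd u).log (hgpos u).ne')
  have hf1d : ∀ u, HasDerivAt f1 (1 / 4 - p * Real.exp u * (1 - p) / (g u) ^ 2) u := by
    intro u
    have hq : HasDerivAt (fun u => p * Real.exp u / g u)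
        ((p * Real.exp u * g u - p * Real.exp u * (p * Real.exp u)) / (g u) ^ 2) u :=
      ((Real.hasDerivAt_exp u).const_mul p).div (hgd u) (hgpos u).ne'
    have h1 : HasDerivAt (fun u : ℝ => p + u / 4) (1 / 4) u := by
      simpa using ((hasDerivAt_id u).div_const 4).const_add p
    have := h1.sub hq
    refine HasDerivAt.congr_deriv this ?_
    have := (hgpos u).ne'
    simp only [hg]
    ring
  have hf2nonneg : ∀ u, 0 ≤ 1 / 4 - p * Real.exp u * (1 - p) / (g u) ^ 2 := by
    intro u
    rw [sub_nonneg, div_le_iff₀ (pow_pos (hgpos u) 2)]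
    have : g u = 1 - p + p * Real.exp u := rfl
    nlinarith [sq_nonneg (1 - p - p * Real.exp u)]
  have hf1mono : Monotone f1 :=
    monotone_of_deriv_nonneg (fun u => (hf1d u).differentiableAt)
      (fun u => by rw [(hf1d u).deriv]; exact hf2nonneg u)
  have hf10 : f1 0 = 0 := by
    have : g 0 = 1 := by simp [hg]
    simp [hf1, this]
  have hf0 : f 0 = 0 := by
    have : g 0 = 1 := by simp [hg]
    simp [hf, this]
  have hdiff : Differentiable ℝ f := fun u => (hfd u).differentiableAt
  have key : 0 ≤ f u := by
    rcases le_total 0 u with h | h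
    · have mono : MonotoneOn f (Set.Ici (0:ℝ)) :=
        monotoneOn_of_deriv_nonneg (convex_Ici 0) hdiff.continuous.continuousOn
          hdiff.differentiableOn
          (fun x hx => by
            rw [(hfd x).deriv]
            rw [interior_Ici] at hx
            calc (0:ℝ) = f1 0 := hf10.symm
              _ ≤ f1 x := hf1mono (le_of_lt hx))
      have := mono (Set.mem_Ici.2 le_rfl) (Set.mem_Ici.2 h) h
      rwa [hf0] at this
    · have anti : AntitoneOn f (Set.Iic (0:ℝ)) :=
        antitoneOn_of_deriv_nonpos (convex_Iic 0) hdiff.continuous.continuousOn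
          hdiff.differentiableOn
          (fun x hx => by
            rw [(hfd x).deriv]
            rw [interior_Iic] at hx
            calc f1 x ≤ f1 0 := hf1mono (le_of_lt hx)
              _ = 0 := hf10)
      have := anti (Set.mem_Iic.2 h) (Set.mem_Iic.2 le_rfl) h
      rwa [hf0] at this
  have hlog : Real.log (g u) ≤ p * u + u ^ 2 / 8 := by
    simp only [hf] at key; linarith
  simpa [hg] using hlog

lemma aux_finite_hoeffding {J : Type*} [Fintype J] (w X : J → ℝ) (B s : ℝ) (hB : 0 ≤ B)
    (hw : ∀ j, 0 ≤ w j) (hw1 : ∑ j, w j = 1) (hX : ∀ j, 0 ≤ X j ∧ X j ≤ B) :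
    Real.log (∑ j, w j * Real.exp (s * X j)) ≤ s * (∑ j, w j * X j) + s ^ 2 * B ^ 2 / 8 := by
  have hpos : (0:ℝ) < ∑ j, w j * Real.exp (s * X j) := by
    have hex : ∃ j, 0 < w j := by
      by_contra h
      push_neg at h
      have h0 : ∑ j, w j = 0 := Finset.sum_eq_zero fun j _ => le_antisymm (h j) (hw j)
      rw [h0] at hw1; norm_num at hw1
    obtain ⟨j0, hj0⟩ := hex
    refine Finset.sum_pos' (fun j _ => mul_nonneg (hw j) (Real.exp_pos _).le)
      ⟨j0, Finset.mem_univ _, by positivity⟩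
  rcases eq_or_lt_of_le hB with hB0 | hB0
  · have hX0 : ∀ j, X j = 0 := fun j => le_antisymm (hB0 ▸ (hX j).2) (hX j).1
    simp [hX0, hw1, ← hB0]
  · set μ := ∑ j, w j * X j with hμ
    have hμ0 : 0 ≤ μ := Finset.sum_nonneg fun j _ => mul_nonneg (hw j) (hX j).1
    have hμB : μ ≤ B := by
      calc μ ≤ ∑ j, w j * B := Finset.sum_le_sum fun j _ =>
              mul_le_mul_of_nonneg_left (hX j).2 (hw j)
        _ = B := by rw [← Finset.sum_mul, hw1, one_mul]
    have hp0 : 0 ≤ μ / B := div_nonneg hμ0 hB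
    have hp1 : μ / B ≤ 1 := (div_le_one hB0).2 hμB
    have step1 : ∑ j, w j * Real.exp (s * X j)
        ≤ 1 - μ / B + μ / B * Real.exp (s * B) := by
      have ptwise : ∀ j, Real.exp (s * X j)
          ≤ (1 - X j / B) + X j / B * Real.exp (s * B) := by
        intro j
        have ht0 : 0 ≤ X j / B := div_nonneg (hX j).1 hB
        have ht1 : X j / B ≤ 1 := (div_le_one hB0).2 (hX j).2
        have hc := convexOn_exp.2 (Set.mem_univ (0:ℝ)) (Set.mem_univ (s * B))
          (by linarith : (0:ℝ) ≤ 1 - X j / B) ht0 (by ring)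
        simp only [smul_eq_mul, mul_zero, zero_add, Real.exp_zero, mul_one] at hc
        have harg : X j / B * (s * B) = s * X j := by field_simp
        rwa [harg] at hc
      calc ∑ j, w j * Real.exp (s * X j)
          ≤ ∑ j, w j * ((1 - X j / B) + X j / B * Real.exp (s * B)) :=
            Finset.sum_le_sum fun j _ => mul_le_mul_of_nonneg_left (ptwise j) (hw j)
        _ = 1 - μ / B + μ / B * Real.exp (s * B) := by
            have he : ∀ j, w j * ((1 - X j / B) + X j / B * Real.exp (s * B))
                = w j - w j * X j / B + w j * X j / B * Real.exp (s * B) := by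
              intro j; ring
            simp only [he, Finset.sum_add_distrib, Finset.sum_sub_distrib,
              ← Finset.sum_div, ← Finset.sum_mul, hw1, hμ]
    calc Real.log (∑ j, w j * Real.exp (s * X j))
        ≤ Real.log (1 - μ / B + μ / B * Real.exp (s * B)) := Real.log_le_log hpos step1
      _ ≤ μ / B * (s * B) + (s * B) ^ 2 / 8 := aux_bernoulli_mgf hp0 hp1 (s * B)
      _ = s * μ + s ^ 2 * B ^ 2 / 8 := by field_simp

lemma aux_ew_regret {J : Type*} [Fintype J] [Nonempty J] (η B : ℝ) (hB : 0 ≤ B)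
    (bl : J → ℕ → ℝ) (hbl : ∀ j i, 0 ≤ bl j i ∧ bl j i ≤ B) (T : ℕ) (j : J) :
    η * ewExpectedLoss η bl T
      ≤ η * cumBlockLoss bl j T + Real.log (Fintype.card J) + T * (η ^ 2 * B ^ 2 / 8) := by
  set W : ℕ → ℝ := fun i => ∑ j' : J, Real.exp (-η * cumBlockLoss bl j' i) with hW
  have hWpos : ∀ i, 0 < W i := fun i =>
    Finset.sum_pos (fun j' _ => Real.exp_pos _) Finset.univ_nonempty
  have claim : ∀ T : ℕ, Real.log (W T)
      ≤ Real.log (Fintype.card J) - η * ewExpectedLoss η bl T + T * (η ^ 2 * B ^ 2 / 8) := by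
    intro T
    induction T with
    | zero =>
        have h0 : W 0 = Fintype.card J := by
          simp [hW, cumBlockLoss]
        simp [h0, ewExpectedLoss]
    | succ T ih =>
        have hw : ∀ j', 0 ≤ expWeight η bl T j' := fun j' =>
          div_nonneg (Real.exp_pos _).le (hWpos T).le
        have hw1 : ∑ j' : J, expWeight η bl T j' = 1 := by
          simp only [expWeight, ← Finset.sum_div]
          exact div_self (hWpos T).ne'
        have hWsucc : W (T + 1) = W T * ∑ j' : J, expWeight η bl T j' * Real.exp (-η * bl j' T) := by
          rw [Finset.mul_sum]
          refine Finset.sum_congr rfl fun j' _ => ?_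
          simp only [expWeight]
          rw [cumBlockLoss, Finset.sum_range_succ, ← cumBlockLoss]
          rw [show -η * (cumBlockLoss bl j' T + bl j' T)
              = -η * cumBlockLoss bl j' T + -η * bl j' T by ring, Real.exp_add]
          have hden : (∑ j' : J, Real.exp (-η * cumBlockLoss bl j' T)) = W T := rfl
          rw [hden]
          field_simp
          exact (div_self (hWpos T).ne').symm
        have hQpos : 0 < ∑ j' : J, expWeight η bl T j' * Real.exp (-η * bl j' T) := by
          have h := hWpos (T + 1)
          rw [hWsucc] at h
          nlinarith [hWpos T]
        have hhoef := aux_finite_hoeffding (expWeight η bl T) (fun j' => bl j' T) B (-η) hB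
          hw hw1 (fun j' => hbl j' T)
        have hlog : Real.log (W (T + 1)) = Real.log (W T)
            + Real.log (∑ j' : J, expWeight η bl T j' * Real.exp (-η * bl j' T)) := by
          rw [hWsucc, Real.log_mul (hWpos T).ne' hQpos.ne']
        have hEW : ewExpectedLoss η bl (T + 1)
            = ewExpectedLoss η bl T + ∑ j' : J, expWeight η bl T j' * bl j' T := by
          rw [ewExpectedLoss, Finset.sum_range_succ, ← ewExpectedLoss]
        rw [hlog, hEW]
        push_cast
        nlinarith [hhoef, ih]
  have hlow : -η * cumBlockLoss bl j T ≤ Real.log (W T) := by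
    have hle : Real.exp (-η * cumBlockLoss bl j T) ≤ W T :=
      Finset.single_le_sum (f := fun j' => Real.exp (-η * cumBlockLoss bl j' T))
        (fun j' _ => (Real.exp_pos _).le) (Finset.mem_univ j)
    calc -η * cumBlockLoss bl j T = Real.log (Real.exp (-η * cumBlockLoss bl j T)) :=
          (Real.log_exp _).symm
      _ ≤ Real.log (W T) := Real.log_le_log (Real.exp_pos _) hle
  have := claim T
  linarith

lemma aux_Kq_mul_le {n m : ℕ} (hm : 0 < m) (hmn : m ≤ n) : Kq n m * m ≤ n := by
  rw [Kq]
  have h1 : 1 ≤ (n + m - 1) / m := (Nat.one_le_div_iff hm).2 (by omega)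
  have h2 : (n + m - 1) / m * m ≤ n + m - 1 := Nat.div_mul_le_self _ _
  have h3 : ((n + m - 1) / m - 1) * m = (n + m - 1) / m * m - m := by
    rw [Nat.sub_mul, one_mul]
  omega

end AuxEW

set_option maxHeartbeats 1000000 in
theorem statement2 {A D : Type*} [Nonempty A]
    (lmax : ℝ) (l : A → D → ℝ) (hl : ∀ a d, 0 ≤ l a d ∧ l a d ≤ lmax)
    (n m : ℕ) (hm : 0 < m) (hmn : m ≤ n)
    (lam : ℕ) (hlam : 0 < lam)
    (S : Fin lam → Scandictor A D (Fin m × Fin m))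
    (x : Fin n × Fin n → A) :
    (boundaryLoss n m lmax +
        ewExpectedLoss (ewEta n m lmax lam) (blockLoss l n m S x) (Kq n m * Kq n m))
      - Finset.univ.inf' ⟨⟨0, hlam⟩, Finset.mem_univ _⟩
          (fun j => boundaryLoss n m lmax +
            cumBlockLoss (blockLoss l n m S x) j (Kq n m * Kq n m))
      ≤ (m : ℝ) * ((n : ℝ) + m) * Real.sqrt (Real.log lam) * lmax / Real.sqrt 2 := by
  classical
  -- basic positivity facts
  have hd0 : D := (S ⟨0, hlam⟩).pred 0 (fun _ => Classical.arbitrary A)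
  have hlmax0 : 0 ≤ lmax := by
    have := hl (Classical.arbitrary A) hd0
    linarith [this.1, this.2]
  have hJ : Nonempty (Fin lam) := ⟨⟨0, hlam⟩⟩
  set bl := blockLoss l n m S x with hbldef
  set T := Kq n m * Kq n m with hT
  set BB : ℝ := (m : ℝ) ^ 2 * lmax with hBB
  have hBBnn : 0 ≤ BB := by positivity
  have hbl : ∀ j i, 0 ≤ bl j i ∧ bl j i ≤ BB := by
    intro j i
    rw [hbldef]
    simp only [blockLoss, sLoss, cumLoss]
    constructor
    · exact Finset.sum_nonneg fun t _ => (hl _ _).1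
    · calc (∑ t : Fin (Fintype.card (Fin m × Fin m)), l _ _)
            ≤ ∑ _t : Fin (Fintype.card (Fin m × Fin m)), lmax :=
            Finset.sum_le_sum fun t _ => (hl _ _).2
        _ = (Fintype.card (Fin m × Fin m) : ℝ) * lmax := by
            rw [Finset.sum_const, Finset.card_univ, nsmul_eq_mul, Fintype.card_fin]
        _ = BB := by
            rw [hBB, Fintype.card_prod, Fintype.card_fin]
            push_cast
            ring
  obtain ⟨j0, -, hj0⟩ := Finset.exists_mem_eq_inf'
    (⟨⟨0, hlam⟩, Finset.mem_univ _⟩ : (Finset.univ : Finset (Fin lam)).Nonempty)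
    (fun j => boundaryLoss n m lmax + cumBlockLoss bl j T)
  rw [hj0]
  have hgoal : boundaryLoss n m lmax + ewExpectedLoss (ewEta n m lmax lam) bl T
      - (boundaryLoss n m lmax + cumBlockLoss bl j0 T)
      = ewExpectedLoss (ewEta n m lmax lam) bl T - cumBlockLoss bl j0 T := by ring
  rw [hgoal]
  rcases eq_or_lt_of_le (Nat.succ_le_of_lt hlam) with h1 | hlam2
  · -- lam = 1 : single expert, zero regret, zero RHS
    have hlam1 : lam = 1 := h1.symm
    subst hlam1
    have hEW : ewExpectedLoss (ewEta n m lmax 1) bl T = cumBlockLoss bl j0 T := by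
      rw [ewExpectedLoss, cumBlockLoss]
      refine Finset.sum_congr rfl fun i _ => ?_
      rw [Fin.sum_univ_one]
      have hjj : j0 = 0 := Subsingleton.elim _ _
      rw [expWeight, Fin.sum_univ_one, div_self (Real.exp_ne_zero _), one_mul, hjj]
    rw [hEW]
    simp
  · -- lam ≥ 2
    rcases eq_or_lt_of_le hlmax0 with hlz | hlpos
    · -- lmax = 0 : everything vanishes
      have hl0 : ∀ a d, l a d = 0 := fun a d => le_antisymm (hlz ▸ (hl a d).2) (hl a d).1
      have hbl0 : ∀ j i, bl j i = 0 := by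
        intro j i
        rw [hbldef]
        simp only [blockLoss, sLoss, cumLoss]
        exact Finset.sum_eq_zero fun t _ => hl0 _ _
      have hEW0 : ewExpectedLoss (ewEta n m lmax lam) bl T = 0 := by
        rw [ewExpectedLoss]
        refine Finset.sum_eq_zero fun i _ => Finset.sum_eq_zero fun j _ => by
          rw [hbl0, mul_zero]
      have hC0 : cumBlockLoss bl j0 T = 0 :=
        Finset.sum_eq_zero fun a _ => hbl0 _ _
      rw [hEW0, hC0, ← hlz]
      simp
    · -- main case : lam ≥ 2, lmax > 0
      have hLpos : 0 < Real.log lam := Real.log_pos (by exact_mod_cast hlam2)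
      set L := Real.log (lam : ℝ) with hLdef
      set c : ℝ := (m : ℝ) * lmax * ((n : ℝ) + (m : ℝ)) with hc
      have hcpos : 0 < c := by
        have hm' : (0:ℝ) < m := by exact_mod_cast hm
        have hn' : (0:ℝ) ≤ n := Nat.cast_nonneg n
        rw [hc]; positivity
      have hη : 0 < ewEta n m lmax lam := by
        rw [ewEta]
        apply div_pos _ hcpos
        have : 0 < Real.sqrt (2 * L) := Real.sqrt_pos.2 (by linarith)
        linarith
      set η := ewEta n m lmax lam with hηdef
      have hreg := aux_ew_regret η BB hBBnn bl hbl T j0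
      rw [Fintype.card_fin] at hreg
      -- key computations
      have hs2 : Real.sqrt 2 * Real.sqrt 2 = 2 := Real.mul_self_sqrt (by norm_num)
      have hsL : Real.sqrt L * Real.sqrt L = L := Real.mul_self_sqrt hLpos.le
      have hs2pos : 0 < Real.sqrt 2 := Real.sqrt_pos.2 (by norm_num)
      have hsLpos : 0 < Real.sqrt L := Real.sqrt_pos.2 hLpos
      have hsplit : Real.sqrt (2 * L) = Real.sqrt 2 * Real.sqrt L :=
        Real.sqrt_mul (by norm_num) L
      have hηval : η = 2 * (Real.sqrt 2 * Real.sqrt L) / c := by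
        rw [hηdef, ewEta, hsplit, hc]
      set R : ℝ := (m : ℝ) * ((n : ℝ) + m) * Real.sqrt L * lmax / Real.sqrt 2 with hR
      have hRc : R = c * Real.sqrt L / Real.sqrt 2 := by
        rw [hR, hc]; ring
      have hetaR : η * R = 2 * L := by
        have hexp : η * R = 2 * (Real.sqrt L * Real.sqrt L) * (Real.sqrt 2 / Real.sqrt 2) * (c / c) := by
          rw [hηval, hRc]; ring
        rw [div_self hs2pos.ne', div_self hcpos.ne', hsL, mul_one, mul_one] at hexp
        exact hexp
      have hKm : (Kq n m : ℝ) * (m : ℝ) ≤ (n : ℝ) + (m : ℝ) := by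
        have := aux_Kq_mul_le hm hmn
        have h' : ((Kq n m * m : ℕ) : ℝ) ≤ (n : ℝ) := by exact_mod_cast this
        push_cast at h'
        have : (0:ℝ) ≤ m := Nat.cast_nonneg m
        linarith
      have hsec : (T : ℝ) * (η ^ 2 * BB ^ 2 / 8) ≤ L := by
        have hη2 : η ^ 2 = 8 * L / c ^ 2 := by
          rw [hηval, div_pow]
          congr 1
          linear_combination (4 * (Real.sqrt L * Real.sqrt L)) * hs2 + 8 * hsL
        have hm' : (0:ℝ) < m := by exact_mod_cast hm
        have hKnn : (0:ℝ) ≤ (Kq n m : ℝ) := Nat.cast_nonneg _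
        have hTc : (T : ℝ) = (Kq n m : ℝ) * (Kq n m : ℝ) := by rw [hT]; push_cast; ring
        rw [hTc, hη2, hBB]
        rw [show (Kq n m : ℝ) * (Kq n m : ℝ) * (8 * L / c ^ 2 * ((m:ℝ) ^ 2 * lmax) ^ 2 / 8)
            = L * (((Kq n m : ℝ) * m) ^ 2 * lmax ^ 2 * (m:ℝ) ^ 2 / c ^ 2) from by ring]
        have hc2 : c ^ 2 = (m:ℝ) ^ 2 * lmax ^ 2 * ((n:ℝ) + m) ^ 2 := by rw [hc]; ring
        have hfrac : ((Kq n m : ℝ) * m) ^ 2 * lmax ^ 2 * (m:ℝ) ^ 2 / c ^ 2 ≤ 1 := by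
          rw [div_le_one (by positivity), hc2]
          nlinarith [hKm, mul_nonneg hKnn hm'.le, sq_nonneg ((m:ℝ) * lmax),
            mul_self_le_mul_self (mul_nonneg hKnn hm'.le) hKm]
        nlinarith [hLpos, hfrac]
      have hkey : L + (T : ℝ) * (η ^ 2 * BB ^ 2 / 8) ≤ η * R := by
        rw [hetaR]; linarith
      have hfin : η * (ewExpectedLoss η bl T - cumBlockLoss bl j0 T) ≤ η * R := by
        have hexp : η * (ewExpectedLoss η bl T - cumBlockLoss bl j0 T)
            = η * ewExpectedLoss η bl T - η * cumBlockLoss bl j0 T := by ring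
        rw [hexp]
        linarith [hreg, hkey]
      exact (mul_le_mul_iff_right₀ hη).1 hfin

end Scandiction
end

section
/- In the setting of the block exponential-weighting algorithm (blocks x⁰,…,x^{(K+1)²−1} of an n×n array, λ experts with per-block losses in [0, m²·l_max], independent exponential-weighting selections with parameter η = 2√(2 log λ)/(m·l_max·(n+m))), let L_alg(x) denote the realized (random) cumulative loss of the algorithm and L_min(x) the cumulative loss of the best expert operating block-wise. Then for every individual array x ∈ A^{V_n} and every ε > 0: P( L_alg(x) − L_min(x) ≥ (K+1)²·ε + m(n+m)·√(log λ)·l_max/√2 ) ≤ exp( −2(K+1)²·ε² / (m²·l_max)² ), where the probability is over the algorithm's independent randomized expert selections. -/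
open MeasureTheory Filter Real

namespace Scandiction

variable {A D B : Type*}

section ExpWeighting

variable {J : Type*}

/-- Realized cumulative loss, selections indexed by `Fin T`. -/
noncomputable def ewRealizedLossF (bl : J → ℕ → ℝ) (T : ℕ) (ω : Fin T → J) : ℝ :=
  ∑ i : Fin T, bl (ω i) i.1

end ExpWeighting



lemma hoeffding_scalar {p : ℝ} (hp0 : 0 ≤ p) (hp1 : p ≤ 1) (u : ℝ) :
    (1 - p) + p * Real.exp u ≤ Real.exp (p * u + u ^ 2 / 8) := by
  rcases eq_or_lt_of_le hp1 with h1 | h1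
  · subst h1
    simp only [sub_self, zero_add, one_mul]
    refine Real.exp_le_exp.2 ?_
    nlinarith [sq_nonneg u]
  rcases eq_or_lt_of_le hp0 with h0 | h0
  · subst h0
    simp only [sub_zero, zero_mul, add_zero, zero_add]
    calc (1:ℝ) = Real.exp 0 := Real.exp_zero.symm
    _ ≤ _ := Real.exp_le_exp.2 (by positivity)
  -- now 0 < p < 1
  set d : ℝ → ℝ := fun u => 1 - p + p * Real.exp u with hd_def
  have hdpos : ∀ u, 0 < d u := fun u => by
    have := Real.exp_pos u
    simp only [hd_def]; nlinarith
  set g : ℝ → ℝ := fun u => p * Real.exp u / d u with hg_def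
  set h : ℝ → ℝ := fun u => p + u / 4 - g u with hh_def
  set f : ℝ → ℝ := fun u => p * u + u ^ 2 / 8 - Real.log (d u) with hf_def
  have hd : ∀ u, HasDerivAt d (p * Real.exp u) u := fun u => by
    exact (((Real.hasDerivAt_exp u).const_mul p).const_add (1 - p))
  have hgb : ∀ u, 0 < g u ∧ g u < 1 := fun u => by
    have h1' : 0 < p * Real.exp u := by positivity
    have h2' : p * Real.exp u < d u := by simp only [hd_def]; nlinarith
    exact ⟨div_pos h1' (hdpos u), (div_lt_one (hdpos u)).2 h2'⟩
  have hg : ∀ u, HasDerivAt g (g u - (g u) ^ 2) u := fun u => by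
    have := ((Real.hasDerivAt_exp u).const_mul p).div (hd u) (hdpos u).ne'
    refine this.congr_deriv ?_
    have hdu := (hdpos u).ne'
    simp only [hg_def]
    field_simp
  have hh : ∀ u, HasDerivAt h (1 / 4 - (g u - (g u) ^ 2)) u := fun u => by
    have : HasDerivAt (fun u : ℝ => p + u / 4) (1 / 4) u := by
      simpa using ((hasDerivAt_id u).div_const 4).const_add p
    exact this.sub (hg u)
  have hf : ∀ u, HasDerivAt f (h u) u := fun u => by
    have hlog : HasDerivAt (fun u => Real.log (d u)) (p * Real.exp u / d u) u :=
      (hd u).log (hdpos u).ne'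
    have hpoly : HasDerivAt (fun u : ℝ => p * u + u ^ 2 / 8) (p + u / 4) u := by
      have h1' : HasDerivAt (fun u : ℝ => p * u) p u := by
        simpa using (hasDerivAt_id u).const_mul p
      have h2' : HasDerivAt (fun u : ℝ => u ^ 2 / 8) (2 * u / 8) u := by
        simpa using ((hasDerivAt_pow 2 u)).div_const 8
      refine (h1'.add h2').congr_deriv ?_
      ring
    have := hpoly.sub hlog
    exact this
  have hmono : Monotone h := by
    refine monotone_of_deriv_nonneg (fun u => (hh u).differentiableAt) (fun u => ?_)
    rw [(hh u).deriv]
    nlinarith [sq_nonneg (g u - 1 / 2)]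
  have hg0 : g 0 = p := by
    simp only [hg_def, hd_def]
    rw [Real.exp_zero]; field_simp; ring
  have hh0 : h 0 = 0 := by simp [hh_def, hg0]
  have hf0 : f 0 = 0 := by
    simp only [hf_def, hd_def]
    rw [Real.exp_zero]
    norm_num
  have hfnonneg : 0 ≤ f u := by
    rcases le_or_gt 0 u with hu | hu
    · have : MonotoneOn f (Set.Ici 0) := by
        refine monotoneOn_of_deriv_nonneg (convex_Ici 0)
          (fun x _ => ((hf x).differentiableAt).continuousAt.continuousWithinAt)
          (fun x _ => ((hf x).differentiableAt).differentiableWithinAt) (fun x hx => ?_)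
        rw [(hf x).deriv, ← hh0]
        exact hmono (le_of_lt (by simpa using hx))
      have := this (Set.self_mem_Ici) (Set.mem_Ici.2 hu) hu
      linarith [hf0 ▸ this]
    · have : AntitoneOn f (Set.Iic 0) := by
        refine antitoneOn_of_deriv_nonpos (convex_Iic 0)
          (fun x _ => ((hf x).differentiableAt).continuousAt.continuousWithinAt)
          (fun x _ => ((hf x).differentiableAt).differentiableWithinAt) (fun x hx => ?_)
        rw [(hf x).deriv, ← hh0]
        exact hmono (le_of_lt (by simpa using hx))
      have := this (Set.mem_Iic.2 hu.le) (Set.self_mem_Iic) hu.le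
      linarith [hf0 ▸ this]
  have hlog : Real.log (d u) ≤ p * u + u ^ 2 / 8 := by
    simp only [hf_def] at hfnonneg; linarith
  calc (1 - p) + p * Real.exp u = d u := rfl
  _ ≤ Real.exp (p * u + u ^ 2 / 8) := by
      rw [← Real.exp_log (hdpos u)]
      exact Real.exp_le_exp.2 hlog


lemma hoeffding_weighted {J : Type*} [Fintype J] (w X : J → ℝ) (Bd s : ℝ)
    (hB : 0 < Bd) (hw0 : ∀ j, 0 ≤ w j) (hw1 : ∑ j, w j = 1)
    (hX0 : ∀ j, 0 ≤ X j) (hXB : ∀ j, X j ≤ Bd) :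
    ∑ j, w j * Real.exp (s * X j) ≤
      Real.exp (s * (∑ j, w j * X j) + s ^ 2 * Bd ^ 2 / 8) := by
  set μ := ∑ j, w j * X j with hμ_def
  have hμ0 : 0 ≤ μ := Finset.sum_nonneg fun j _ => mul_nonneg (hw0 j) (hX0 j)
  have hμB : μ ≤ Bd := by
    calc μ ≤ ∑ j, w j * Bd :=
          Finset.sum_le_sum fun j _ => mul_le_mul_of_nonneg_left (hXB j) (hw0 j)
    _ = Bd := by rw [← Finset.sum_mul, hw1, one_mul]
  have step : ∀ j, Real.exp (s * X j) ≤
      (1 - X j / Bd) + (X j / Bd) * Real.exp (s * Bd) := by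
    intro j
    have ht0 : (0:ℝ) ≤ X j / Bd := div_nonneg (hX0 j) hB.le
    have ht1 : X j / Bd ≤ 1 := (div_le_one hB).2 (hXB j)
    have := convexOn_exp.2 (Set.mem_univ 0) (Set.mem_univ (s * Bd))
      (by linarith : (0:ℝ) ≤ 1 - X j / Bd) ht0 (by ring)
    simp only [smul_eq_mul, mul_zero, zero_add, Real.exp_zero, mul_one] at this
    have hx : X j / Bd * (s * Bd) = s * X j := by field_simp
    rw [hx] at this
    linarith
  calc ∑ j, w j * Real.exp (s * X j)
      ≤ ∑ j, w j * ((1 - X j / Bd) + (X j / Bd) * Real.exp (s * Bd)) :=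
        Finset.sum_le_sum fun j _ => mul_le_mul_of_nonneg_left (step j) (hw0 j)
    _ = (1 - μ / Bd) + (μ / Bd) * Real.exp (s * Bd) := by
        have : ∀ j, w j * ((1 - X j / Bd) + (X j / Bd) * Real.exp (s * Bd)) =
            w j - (w j * X j) / Bd + (w j * X j) / Bd * Real.exp (s * Bd) := by
          intro j; field_simp
        simp only [this, Finset.sum_add_distrib, Finset.sum_sub_distrib,
          ← Finset.sum_div, ← Finset.sum_mul, hw1, ← hμ_def]
    _ ≤ Real.exp ((μ / Bd) * (s * Bd) + (s * Bd) ^ 2 / 8) :=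
        hoeffding_scalar (div_nonneg hμ0 hB.le) ((div_le_one hB).2 hμB) (s * Bd)
    _ = Real.exp (s * μ + s ^ 2 * Bd ^ 2 / 8) := by
        congr 1
        field_simp

section Lemmas

variable {J : Type*} [Fintype J] [Nonempty J]

lemma sumExp_pos (η : ℝ) (bl : J → ℕ → ℝ) (i : ℕ) :
    0 < ∑ j' : J, Real.exp (-η * cumBlockLoss bl j' i) :=
  Finset.sum_pos (fun _ _ => Real.exp_pos _) Finset.univ_nonempty

lemma expWeight_nonneg (η : ℝ) (bl : J → ℕ → ℝ) (i : ℕ) (j : J) :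
    0 ≤ expWeight η bl i j :=
  div_nonneg (Real.exp_pos _).le (sumExp_pos η bl i).le

lemma sum_expWeight (η : ℝ) (bl : J → ℕ → ℝ) (i : ℕ) :
    ∑ j : J, expWeight η bl i j = 1 := by
  simp only [expWeight]
  rw [← Finset.sum_div]
  exact div_self (sumExp_pos η bl i).ne'

lemma selProb_nonneg (η : ℝ) (bl : J → ℕ → ℝ) (T : ℕ) (ω : Fin T → J) :
    0 ≤ selProb η bl T ω :=
  Finset.prod_nonneg fun i _ => expWeight_nonneg η bl i.1 (ω i)

lemma sum_selProb_mul [DecidableEq J] (η : ℝ) (bl : J → ℕ → ℝ) (T : ℕ) (g : ℕ → J → ℝ) :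
    ∑ ω : Fin T → J, selProb η bl T ω * ∏ i : Fin T, g i.1 (ω i)
      = ∏ i : Fin T, ∑ j : J, expWeight η bl i.1 j * g i.1 j := by
  simp only [selProb, ← Finset.prod_mul_distrib]
  exact (Fintype.prod_sum fun (i : Fin T) (j : J) => expWeight η bl i.1 j * g i.1 j).symm

lemma ew_recursion (η Bd : ℝ) (hB : 0 < Bd) (bl : J → ℕ → ℝ)
    (hbl0 : ∀ j i, 0 ≤ bl j i) (hblB : ∀ j i, bl j i ≤ Bd) (i : ℕ) :
    ∑ j : J, Real.exp (-η * cumBlockLoss bl j (i + 1))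
      ≤ (∑ j : J, Real.exp (-η * cumBlockLoss bl j i)) *
          Real.exp (-η * (∑ j : J, expWeight η bl i j * bl j i) + η ^ 2 * Bd ^ 2 / 8) := by
  have hW := sumExp_pos η bl i
  have h1 : ∑ j : J, Real.exp (-η * cumBlockLoss bl j (i + 1))
      = (∑ j : J, Real.exp (-η * cumBlockLoss bl j i)) *
        ∑ j : J, expWeight η bl i j * Real.exp (-η * bl j i) := by
    rw [Finset.mul_sum]
    refine Finset.sum_congr rfl fun j _ => ?_
    rw [expWeight]
    rw [show cumBlockLoss bl j (i + 1) = cumBlockLoss bl j i + bl j i from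
      Finset.sum_range_succ _ _]
    rw [mul_add, Real.exp_add]
    field_simp
  rw [h1]
  have h2 := hoeffding_weighted (expWeight η bl i) (fun j => bl j i) Bd (-η) hB
    (expWeight_nonneg η bl i) (sum_expWeight η bl i) (fun j => hbl0 j i) (fun j => hblB j i)
  have h3 : (-η) ^ 2 = η ^ 2 := by ring
  rw [h3] at h2
  refine mul_le_mul_of_nonneg_left ?_ hW.le
  simpa using h2

lemma ew_weightSum_le (η Bd : ℝ) (hB : 0 < Bd) (bl : J → ℕ → ℝ)
    (hbl0 : ∀ j i, 0 ≤ bl j i) (hblB : ∀ j i, bl j i ≤ Bd) (T : ℕ) :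
    ∑ j : J, Real.exp (-η * cumBlockLoss bl j T)
      ≤ (Fintype.card J : ℝ) *
          Real.exp (-η * ewExpectedLoss η bl T + T * (η ^ 2 * Bd ^ 2 / 8)) := by
  induction T with
  | zero => simp [cumBlockLoss, ewExpectedLoss]
  | succ T ih =>
    calc ∑ j : J, Real.exp (-η * cumBlockLoss bl j (T + 1))
        ≤ (∑ j : J, Real.exp (-η * cumBlockLoss bl j T)) *
            Real.exp (-η * (∑ j : J, expWeight η bl T j * bl j T) + η ^ 2 * Bd ^ 2 / 8) :=
          ew_recursion η Bd hB bl hbl0 hblB T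
      _ ≤ ((Fintype.card J : ℝ) *
            Real.exp (-η * ewExpectedLoss η bl T + T * (η ^ 2 * Bd ^ 2 / 8))) *
            Real.exp (-η * (∑ j : J, expWeight η bl T j * bl j T) + η ^ 2 * Bd ^ 2 / 8) :=
          mul_le_mul_of_nonneg_right ih (Real.exp_pos _).le
      _ = _ := by
          rw [mul_assoc, ← Real.exp_add]
          congr 2
          simp only [ewExpectedLoss, Finset.sum_range_succ]
          push_cast
          ring

lemma ew_regret (η Bd : ℝ) (hη : 0 < η) (hB : 0 < Bd) (bl : J → ℕ → ℝ)
    (hbl0 : ∀ j i, 0 ≤ bl j i) (hblB : ∀ j i, bl j i ≤ Bd) (T : ℕ) (j0 : J) :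
    ewExpectedLoss η bl T
      ≤ cumBlockLoss bl j0 T + Real.log (Fintype.card J) / η + T * η * Bd ^ 2 / 8 := by
  have h1 : Real.exp (-η * cumBlockLoss bl j0 T)
      ≤ (Fintype.card J : ℝ) *
          Real.exp (-η * ewExpectedLoss η bl T + T * (η ^ 2 * Bd ^ 2 / 8)) := by
    refine le_trans ?_ (ew_weightSum_le η Bd hB bl hbl0 hblB T)
    exact Finset.single_le_sum (f := fun j => Real.exp (-η * cumBlockLoss bl j T))
      (fun j _ => (Real.exp_pos _).le) (Finset.mem_univ j0)
  have hcard : (0:ℝ) < (Fintype.card J : ℝ) := by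
    exact_mod_cast Fintype.card_pos
  have h2 := Real.log_le_log (Real.exp_pos _) h1
  rw [Real.log_exp, Real.log_mul hcard.ne' (Real.exp_pos _).ne', Real.log_exp] at h2
  have expand : η * (cumBlockLoss bl j0 T + Real.log (Fintype.card J) / η + ↑T * η * Bd ^ 2 / 8)
      = η * cumBlockLoss bl j0 T + Real.log (Fintype.card J) + ↑T * (η ^ 2 * Bd ^ 2 / 8) := by
    field_simp
  have h3 : η * ewExpectedLoss η bl T
      ≤ η * (cumBlockLoss bl j0 T + Real.log (Fintype.card J) / η + ↑T * η * Bd ^ 2 / 8) := by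
    rw [expand]; nlinarith [h2]
  exact le_of_mul_le_mul_left h3 hη

lemma ew_chernoff [DecidableEq J] (η Bd s : ℝ) (hB : 0 < Bd) (hs : 0 ≤ s) (bl : J → ℕ → ℝ)
    (hbl0 : ∀ j i, 0 ≤ bl j i) (hblB : ∀ j i, bl j i ≤ Bd) (T : ℕ) (M thr : ℝ) :
    ∑ ω : Fin T → J,
        Set.indicator {ω : Fin T → J | thr ≤ ewRealizedLossF bl T ω - M}
          (selProb η bl T) ω
      ≤ Real.exp (-s * (M + thr) + s * ewExpectedLoss η bl T + T * (s ^ 2 * Bd ^ 2 / 8)) := by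
  have step1 : ∀ ω : Fin T → J,
      Set.indicator {ω : Fin T → J | thr ≤ ewRealizedLossF bl T ω - M} (selProb η bl T) ω
        ≤ Real.exp (-s * (M + thr)) *
            (selProb η bl T ω * ∏ i : Fin T, Real.exp (s * bl (ω i) i.1)) := by
    intro ω
    have hprod : ∏ i : Fin T, Real.exp (s * bl (ω i) i.1)
        = Real.exp (s * ewRealizedLossF bl T ω) := by
      rw [← Real.exp_sum, ewRealizedLossF, Finset.mul_sum]
    by_cases hω : ω ∈ {ω : Fin T → J | thr ≤ ewRealizedLossF bl T ω - M}
    · rw [Set.indicator_of_mem hω]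
      rw [hprod, mul_comm (Real.exp _) _, mul_assoc, ← Real.exp_add]
      refine le_mul_of_one_le_right (selProb_nonneg η bl T ω) (Real.one_le_exp ?_)
      have := hω
      simp only [Set.mem_setOf_eq] at this
      nlinarith [this, hs]
    · rw [Set.indicator_of_notMem hω]
      refine mul_nonneg (Real.exp_pos _).le (mul_nonneg (selProb_nonneg η bl T ω) ?_)
      exact Finset.prod_nonneg fun i _ => (Real.exp_pos _).le
  calc ∑ ω : Fin T → J,
        Set.indicator {ω : Fin T → J | thr ≤ ewRealizedLossF bl T ω - M} (selProb η bl T) ω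
      ≤ ∑ ω : Fin T → J, Real.exp (-s * (M + thr)) *
          (selProb η bl T ω * ∏ i : Fin T, Real.exp (s * bl (ω i) i.1)) :=
        Finset.sum_le_sum fun ω _ => step1 ω
    _ = Real.exp (-s * (M + thr)) *
          ∏ i : Fin T, ∑ j : J, expWeight η bl i.1 j * Real.exp (s * bl j i.1) := by
        rw [← Finset.mul_sum]
        congr 1
        exact sum_selProb_mul η bl T fun i j => Real.exp (s * bl j i)
    _ ≤ Real.exp (-s * (M + thr)) *
          ∏ i : Fin T, Real.exp (s * (∑ j : J, expWeight η bl i.1 j * bl j i.1)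
            + s ^ 2 * Bd ^ 2 / 8) := by
        refine mul_le_mul_of_nonneg_left ?_ (Real.exp_pos _).le
        refine Finset.prod_le_prod (fun i _ => Finset.sum_nonneg fun j _ =>
          mul_nonneg (expWeight_nonneg η bl i.1 j) (Real.exp_pos _).le) (fun i _ => ?_)
        simpa using hoeffding_weighted (expWeight η bl i.1) (fun j => bl j i.1) Bd s hB
          (expWeight_nonneg η bl i.1) (sum_expWeight η bl i.1)
          (fun j => hbl0 j i.1) (fun j => hblB j i.1)
    _ = Real.exp (-s * (M + thr) + s * ewExpectedLoss η bl T + T * (s ^ 2 * Bd ^ 2 / 8)) := by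
        rw [← Real.exp_sum, ← Real.exp_add]
        congr 1
        rw [Finset.sum_add_distrib, Finset.sum_const, ewExpectedLoss, ← Finset.mul_sum]
        rw [← Fin.sum_univ_eq_sum_range (fun i => ∑ j : J, expWeight η bl i j * bl j i) T]
        simp [Finset.card_univ, nsmul_eq_mul]
        ring

end Lemmas

theorem statement3 {A D : Type*} [Nonempty A]
    (lmax : ℝ) (l : A → D → ℝ) (hl : ∀ a d, 0 ≤ l a d ∧ l a d ≤ lmax)
    (n m : ℕ) (hm : 0 < m) (hmn : m ≤ n)
    (lam : ℕ) (hlam : 0 < lam)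
    (S : Fin lam → Scandictor A D (Fin m × Fin m))
    (x : Fin n × Fin n → A)
    (ε : ℝ) (hε : 0 < ε) :
    ∑ ω : Fin (Kq n m * Kq n m) → Fin lam,
      Set.indicator
        {ω : Fin (Kq n m * Kq n m) → Fin lam |
          ((Kq n m : ℝ) + 1) ^ 2 * ε
              + (m : ℝ) * ((n : ℝ) + m) * Real.sqrt (Real.log lam) * lmax / Real.sqrt 2
            ≤ (boundaryLoss n m lmax +
                  ewRealizedLossF (blockLoss l n m S x) (Kq n m * Kq n m) ω)
              - Finset.univ.inf' ⟨⟨0, hlam⟩, Finset.mem_univ _⟩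
                  (fun j => boundaryLoss n m lmax +
                    cumBlockLoss (blockLoss l n m S x) j (Kq n m * Kq n m))}
        (selProb (ewEta n m lmax lam) (blockLoss l n m S x) (Kq n m * Kq n m)) ω
      ≤ Real.exp (-(2 * ((Kq n m : ℝ) + 1) ^ 2 * ε ^ 2) / ((m : ℝ) ^ 2 * lmax) ^ 2) := by
  
  classical
  have hD : Nonempty D := ⟨(S ⟨0, hlam⟩).pred 0 (fun i => i.elim0)⟩
  obtain ⟨d0⟩ := hD
  have hlmax0 : 0 ≤ lmax := le_trans (hl (Classical.arbitrary A) d0).1 (hl _ d0).2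
  have hJ : Nonempty (Fin lam) := ⟨⟨0, hlam⟩⟩
  set T := Kq n m * Kq n m with hT_def
  set bl := blockLoss l n m S x with hbl_def
  set Bv : ℝ := (m : ℝ) ^ 2 * lmax with hBv_def
  set η := ewEta n m lmax lam with hη_def
  set Kr : ℝ := (Kq n m : ℝ) with hKr_def
  set C : ℝ := (m : ℝ) * ((n : ℝ) + m) * Real.sqrt (Real.log lam) * lmax / Real.sqrt 2
    with hC_def
  set M : ℝ := Finset.univ.inf' ⟨⟨0, hlam⟩, Finset.mem_univ _⟩
    (fun j => cumBlockLoss bl j T) with hM_def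
  set Q : ℝ := (Kr + 1) ^ 2 * ε with hQ_def
  have hKr0 : (0:ℝ) ≤ Kr := by rw [hKr_def]; positivity
  have hQpos : 0 < Q := mul_pos (pow_pos (by linarith) 2) hε
  have hC0 : 0 ≤ C := by
    rw [hC_def]
    apply div_nonneg _ (Real.sqrt_nonneg _)
    refine mul_nonneg (mul_nonneg (mul_nonneg ?_ ?_) (Real.sqrt_nonneg _)) hlmax0 <;> positivity
  -- bounds on the block losses
  have hbl0 : ∀ (j : Fin lam) (i : ℕ), 0 ≤ bl j i := by
    intro j i
    rw [hbl_def]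
    simp only [blockLoss, sLoss, cumLoss]
    exact Finset.sum_nonneg fun t _ => (hl _ _).1
  have hblB : ∀ (j : Fin lam) (i : ℕ), bl j i ≤ Bv := by
    intro j i
    rw [hbl_def, hBv_def]
    simp only [blockLoss, sLoss, cumLoss]
    calc ∑ t : Fin (Fintype.card (Fin m × Fin m)), _ ≤
        ∑ _t : Fin (Fintype.card (Fin m × Fin m)), lmax :=
          Finset.sum_le_sum fun t _ => (hl _ _).2
      _ = (m : ℝ) ^ 2 * lmax := by
          rw [Finset.sum_const, Finset.card_univ, Fintype.card_fin]
          simp only [Fintype.card_prod, Fintype.card_fin, nsmul_eq_mul]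
          push_cast
          ring
  -- rewrite the event
  have hinf : (Finset.univ.inf' ⟨⟨0, hlam⟩, Finset.mem_univ _⟩
      (fun j => boundaryLoss n m lmax + cumBlockLoss bl j T))
      = boundaryLoss n m lmax + M := by
    apply le_antisymm
    · obtain ⟨j0, _, hj0⟩ := Finset.exists_mem_eq_inf'
        (⟨⟨0, hlam⟩, Finset.mem_univ _⟩ : (Finset.univ : Finset (Fin lam)).Nonempty)
        (fun j => cumBlockLoss bl j T)
      rw [hM_def, hj0]
      exact Finset.inf'_le _ (Finset.mem_univ j0)
    · exact Finset.le_inf' _ _ fun j _ =>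
        add_le_add_right (Finset.inf'_le _ (Finset.mem_univ j)) _
  rw [hinf]
  have hsetr : {ω : Fin T → Fin lam |
      Q + C ≤ boundaryLoss n m lmax + ewRealizedLossF bl T ω - (boundaryLoss n m lmax + M)}
      = {ω : Fin T → Fin lam | Q + C ≤ ewRealizedLossF bl T ω - M} := by
    ext ω
    simp only [Set.mem_setOf_eq]
    constructor <;> intro h <;> linarith
  rw [hsetr]
  -- degenerate case: lmax = 0
  by_cases hlz : lmax = 0
  · have hsum1 : ∑ ω : Fin T → Fin lam, selProb η bl T ω = 1 := by
      have := sum_selProb_mul η bl T (fun _ _ => (1 : ℝ))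
      simpa [sum_expWeight] using this
    calc ∑ ω : Fin T → Fin lam,
          Set.indicator {ω : Fin T → Fin lam | Q + C ≤ ewRealizedLossF bl T ω - M}
            (selProb η bl T) ω
        ≤ ∑ ω : Fin T → Fin lam, selProb η bl T ω :=
          Finset.sum_le_sum fun ω _ =>
            Set.indicator_le_self' (fun ω' _ => selProb_nonneg η bl T ω') ω
      _ = 1 := hsum1
      _ ≤ _ := by
          rw [hBv_def, hlz]
          simp
  have hlmax : 0 < lmax := lt_of_le_of_ne hlmax0 (Ne.symm hlz)
  -- degenerate case: lam = 1
  by_cases hlam1 : lam = 1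
  · subst hlam1
    have hMX : M = cumBlockLoss bl ⟨0, hlam⟩ T :=
      le_antisymm (Finset.inf'_le _ (Finset.mem_univ _))
        (Finset.le_inf' _ _ fun j _ => by rw [Subsingleton.elim (⟨0, hlam⟩ : Fin 1) j])
    have hzero : ∀ ω : Fin T → Fin 1,
        Set.indicator {ω : Fin T → Fin 1 | Q + C ≤ ewRealizedLossF bl T ω - M}
          (selProb η bl T) ω = 0 := by
      intro ω
      apply Set.indicator_of_notMem
      simp only [Set.mem_setOf_eq, not_le]
      have hLω : ewRealizedLossF bl T ω = cumBlockLoss bl ⟨0, hlam⟩ T := by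
        rw [ewRealizedLossF, cumBlockLoss, ← Fin.sum_univ_eq_sum_range]
        exact Finset.sum_congr rfl fun i _ => by
          rw [Subsingleton.elim (ω i) (⟨0, hlam⟩ : Fin 1)]
      rw [hLω, hMX]
      linarith
    rw [Finset.sum_eq_zero fun ω _ => hzero ω]
    positivity
  -- degenerate case: K = 0
  by_cases hK0 : Kq n m = 0
  · have hT0 : T = 0 := by rw [hT_def, hK0]
    have hzero : ∀ ω : Fin T → Fin lam,
        Set.indicator {ω : Fin T → Fin lam | Q + C ≤ ewRealizedLossF bl T ω - M}
          (selProb η bl T) ω = 0 := by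
      intro ω
      apply Set.indicator_of_notMem
      simp only [Set.mem_setOf_eq, not_le]
      have hLω : ewRealizedLossF bl T ω = 0 := by
        rw [ewRealizedLossF]
        have : IsEmpty (Fin T) := by rw [hT0]; infer_instance
        simp
      have hMX : M = 0 := by
        have : ∀ j : Fin lam, cumBlockLoss bl j T = 0 := by
          intro j; rw [cumBlockLoss, hT0]; simp
        rw [hM_def]
        simp only [this]
        exact Finset.inf'_const _ _
      rw [hLω, hMX]
      linarith
    rw [Finset.sum_eq_zero fun ω _ => hzero ω]
    positivity
  -- main case
  have hlam2 : 2 ≤ lam := by omega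
  have hLg : 0 < Real.log lam := Real.log_pos (by exact_mod_cast hlam2)
  set σ : ℝ := Real.sqrt (Real.log lam) with hσ_def
  set τ : ℝ := Real.sqrt 2 with hτ_def
  set Dn : ℝ := (m : ℝ) * lmax * ((n : ℝ) + m) with hDn_def
  have hσ : 0 < σ := Real.sqrt_pos.2 hLg
  have hσ2 : σ ^ 2 = Real.log lam := Real.sq_sqrt hLg.le
  have hτ : 0 < τ := Real.sqrt_pos.2 (by norm_num)
  have hτ2 : τ ^ 2 = 2 := Real.sq_sqrt (by norm_num)
  have hm' : (0:ℝ) < m := by exact_mod_cast hm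
  have hnm : (0:ℝ) < (n : ℝ) + m := by positivity
  have hDn : 0 < Dn := by rw [hDn_def]; positivity
  have hη_eq : η = 2 * (τ * σ) / Dn := by
    rw [hη_def, ewEta, hDn_def, hτ_def, hσ_def, Real.sqrt_mul (by norm_num : (0:ℝ) ≤ 2)]
  have hη : 0 < η := by
    rw [hη_eq]
    exact div_pos (mul_pos two_pos (mul_pos hτ hσ)) hDn
  have hBv : 0 < Bv := by rw [hBv_def]; exact mul_pos (pow_pos hm' 2) hlmax
  have hK1 : 1 ≤ Kq n m := Nat.one_le_iff_ne_zero.2 hK0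
  have hKr1 : 1 ≤ Kr := by rw [hKr_def]; exact_mod_cast hK1
  have hTr : ((T : ℕ) : ℝ) = Kr ^ 2 := by rw [hT_def, hKr_def]; push_cast; ring
  have hTpos : (0:ℝ) < (T : ℝ) := by rw [hTr]; exact pow_pos (by linarith) 2
  set s : ℝ := 4 * Q / ((T : ℝ) * Bv ^ 2) with hs_def
  have hs : 0 < s := by
    rw [hs_def]
    exact div_pos (by linarith) (mul_pos hTpos (pow_pos hBv 2))
  -- K·m ≤ n
  have hKm : Kq n m * m ≤ n := by
    have h1 : (n + m - 1) / m * m ≤ n + m - 1 := Nat.div_mul_le_self _ _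
    calc Kq n m * m = (n + m - 1) / m * m - m := by rw [Kq, Nat.sub_one_mul]
      _ ≤ n + m - 1 - m := Nat.sub_le_sub_right h1 m
      _ ≤ n := by omega
  have hKmr : Kr * m ≤ (n : ℝ) := by
    rw [hKr_def]
    exact_mod_cast hKm
  -- regret bound
  have h_reg : ewExpectedLoss η bl T
      ≤ M + (Real.log lam / η + (T : ℝ) * η * Bv ^ 2 / 8) := by
    obtain ⟨j0, _, hj0⟩ := Finset.exists_mem_eq_inf'
      (⟨⟨0, hlam⟩, Finset.mem_univ _⟩ : (Finset.univ : Finset (Fin lam)).Nonempty)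
      (fun j => cumBlockLoss bl j T)
    have := ew_regret η Bv hη hBv bl hbl0 hblB T j0
    rw [Fintype.card_fin] at this
    rw [hM_def, hj0]
    linarith
  -- log λ / η = C / 2
  have h_a : Real.log lam / η = C / 2 := by
    rw [hη_eq, hC_def]
    field_simp
    linear_combination (-((m : ℝ) * lmax * ((n : ℝ) + m))) * hσ2
  -- T η B² / 8 ≤ C / 2
  have hmain : (T : ℝ) * Bv ^ 2 ≤ (m : ℝ) ^ 2 * lmax ^ 2 * ((n : ℝ) + m) ^ 2 := by
    have h1 : (Kr * m) ^ 2 ≤ ((n : ℝ) + m) ^ 2 := by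
      have h0 : (0:ℝ) ≤ Kr * m := mul_nonneg hKr0 hm'.le
      exact pow_le_pow_left₀ h0 (by linarith) 2
    calc (T : ℝ) * Bv ^ 2 = (Kr * m) ^ 2 * ((m : ℝ) ^ 2 * lmax ^ 2) := by
          rw [hTr, hBv_def]; ring
      _ ≤ ((n : ℝ) + m) ^ 2 * ((m : ℝ) ^ 2 * lmax ^ 2) :=
          mul_le_mul_of_nonneg_right h1 (by positivity)
      _ = _ := by ring
  have h_b : (T : ℝ) * η * Bv ^ 2 / 8 ≤ C / 2 := by
    rw [hη_eq, hC_def]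
    rw [div_div]
    rw [show (T : ℝ) * (2 * (τ * σ) / Dn) * Bv ^ 2 / 8
        = (T : ℝ) * Bv ^ 2 * (τ * σ) / (4 * Dn) by field_simp; ring]
    rw [div_le_div_iff₀ (by linarith : (0:ℝ) < 4 * Dn) (by linarith : (0:ℝ) < τ * 2)]
    have hLHS : (T : ℝ) * Bv ^ 2 * (τ * σ) * (τ * 2) = 4 * ((T : ℝ) * Bv ^ 2) * σ := by
      linear_combination (2 * (T : ℝ) * Bv ^ 2 * σ) * hτ2
    rw [hLHS]
    have h2 := mul_le_mul_of_nonneg_right hmain hσ.le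
    rw [hDn_def]
    linarith [h2]
  have hRC : Real.log lam / η + (T : ℝ) * η * Bv ^ 2 / 8 ≤ C := by
    rw [h_a]; linarith
  -- Chernoff bound
  have h_chern := ew_chernoff η Bv s hBv hs.le bl hbl0 hblB T M (Q + C)
  refine le_trans h_chern ?_
  rw [Real.exp_le_exp]
  have hE := h_reg
  have step1 : -s * (M + (Q + C)) + s * ewExpectedLoss η bl T + (T : ℝ) * (s ^ 2 * Bv ^ 2 / 8)
      ≤ -s * Q + (T : ℝ) * (s ^ 2 * Bv ^ 2 / 8) := by
    have h1 := mul_le_mul_of_nonneg_left hE hs.le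
    have h2 := mul_le_mul_of_nonneg_left hRC hs.le
    linarith [h1, h2]
  refine le_trans step1 ?_
  have hW : (0:ℝ) < (T : ℝ) * Bv ^ 2 := mul_pos hTpos (pow_pos hBv 2)
  have heq : -s * Q + (T : ℝ) * (s ^ 2 * Bv ^ 2 / 8) = -2 * Q ^ 2 / ((T : ℝ) * Bv ^ 2) := by
    rw [hs_def]
    field_simp
    ring
  rw [heq]
  rw [div_le_div_iff₀ hW (by positivity : (0:ℝ) < Bv ^ 2)]
  have hTK : (T : ℝ) ≤ (Kr + 1) ^ 2 := by
    rw [hTr]; exact pow_le_pow_left₀ hKr0 (by linarith) 2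
  rw [hQ_def]
  have hfin := mul_le_mul_of_nonneg_left hTK
    (show (0:ℝ) ≤ 2 * (Kr + 1) ^ 2 * ε ^ 2 * Bv ^ 2 by positivity)
  linarith [hfin]


end Scandiction
end

section
/- Let X_B be an arbitrarily distributed binary random field on a finite set of sites B (measure Q_B on {0,1}^B) and l : {0,1}×[0,1] → [0,∞) a loss function. For a scan Ψ for B, let L*(Ψ) = inf over predictors F of E_{Q_B} L_{(Ψ,F)}(X_B) be the expected cumulative loss of Ψ with its optimal predictor, and let U(l,Q_B) = inf over scans Ψ' of (1/|B|) L*(Ψ') be the scandictability of Q_B. Then for every scan Ψ: | (1/|B|) L*(Ψ) − U(l,Q_B) | ≤ 2·ε_l. In particular, the excess loss of any scanning order, accompanied by its optimal predictor, relative to optimal scandiction is at most 2ε_l. -/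
open MeasureTheory Filter Real

namespace Scandiction

variable {A D B : Type*}

/-- Binary entropy (in nats): `h_b(p) = -p log p - (1-p) log (1-p)`. -/
noncomputable def hb (p : ℝ) : ℝ := Real.negMulLog p + Real.negMulLog (1 - p)

/-- Bayes envelope `φ_l(p) = inf_{q ∈ [0,1]} [(1-p)·l(0,q) + p·l(1,q)]`. -/
noncomputable def bayesEnv (l : Bool → unitInterval → ℝ) (p : ℝ) : ℝ :=
  ⨅ q : unitInterval, ((1 - p) * l false q + p * l true q)

/-- `ε_l(α,β) = sup_{p ∈ [0,1]} |α·h_b(p) + β − φ_l(p)|`. -/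
noncomputable def epsF (l : Bool → unitInterval → ℝ) (α β : ℝ) : ℝ :=
  ⨆ p : unitInterval, |α * hb (p : ℝ) + β - bayesEnv l (p : ℝ)|

/-- `ε_l = inf_{α,β} ε_l(α,β)`. -/
noncomputable def epsL (l : Bool → unitInterval → ℝ) : ℝ :=
  ⨅ ab : ℝ × ℝ, epsF l ab.1 ab.2

/-- Expected cumulative loss, under the law `Q` on `{0,1}^B`, of the scan `Ψ` accompanied
by its optimal predictor. -/
noncomputable def optScanLoss [Fintype B] [DecidableEq B] (l : Bool → unitInterval → ℝ)
    (Q : (B → Bool) → ℝ) (Ψ : ∀ t : ℕ, (Fin t → Bool) → B) : ℝ :=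
  ⨅ F : ∀ t : ℕ, (Fin t → Bool) → unitInterval, ∑ x : B → Bool, Q x * cumLoss l Ψ F x

/-- Shannon entropy (in nats) of the law `Q`. -/
noncomputable def entQ [Fintype B] [DecidableEq B] (Q : (B → Bool) → ℝ) : ℝ :=
  ∑ x : B → Bool, Real.negMulLog (Q x)

/-- Scandictability of the law `Q` on `{0,1}^B`. -/
noncomputable def scandQ [Fintype B] [DecidableEq B] (l : Bool → unitInterval → ℝ)
    (Q : (B → Bool) → ℝ) : ℝ :=
  ⨅ Ψ : {Ψ : ∀ t : ℕ, (Fin t → Bool) → B // IsValidScan Ψ},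
    optScanLoss l Q Ψ.1 / Fintype.card B

/-! ### Auxiliary development -/

section Seq

variable {n : ℕ}

/-- Truncation of a binary sequence: keep the first `t` bits, zero the rest. -/
def trunc (t : ℕ) (z : Fin n → Bool) : Fin n → Bool :=
  fun i => if (i : ℕ) < t then z i else false

lemma trunc_idem (t : ℕ) (z : Fin n → Bool) : trunc t (trunc t z) = trunc t z := by
  funext i; simp only [trunc]; split <;> simp_all [trunc]

lemma trunc_card (z : Fin n → Bool) : trunc n z = z := by
  funext i; simp [trunc, i.isLt]

lemma trunc_succ (t : Fin n) (z : Fin n → Bool) :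
    trunc ((t : ℕ) + 1) z = Function.update (trunc (t : ℕ) z) t (z t) := by
  funext i
  rcases eq_or_ne i t with rfl | h
  · simp [trunc, Function.update_self]
  · have hne : (i : ℕ) ≠ (t : ℕ) := fun hc => h (Fin.ext hc)
    have hiff : (i : ℕ) < (t : ℕ) + 1 ↔ (i : ℕ) < (t : ℕ) :=
      ⟨fun hi => lt_of_le_of_ne (Nat.lt_succ_iff.1 hi) hne, fun hi => hi.trans (Nat.lt_succ_self _)⟩
    simp [trunc, Function.update_of_ne h, hiff]

variable (P : (Fin n → Bool) → ℝ)

/-- Marginal mass of the prefix class of `w` of length `t`. -/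
noncomputable def Sm (t : ℕ) (w : Fin n → Bool) : ℝ :=
  ∑ z : Fin n → Bool, if trunc t z = w then P z else 0

/-- Mass of the prefix class of `w` of length `t` intersected with `{z t = b}`. -/
noncomputable def SmB (t : Fin n) (b : Bool) (w : Fin n → Bool) : ℝ :=
  ∑ z : Fin n → Bool, if trunc (t : ℕ) z = w ∧ z t = b then P z else 0

/-- Conditional probability that bit `t` equals `true` given the prefix of `z` before `t`. -/
noncomputable def condP (t : Fin n) (z : Fin n → Bool) : ℝ :=
  SmB P t true (trunc (t : ℕ) z) / Sm P (t : ℕ) (trunc (t : ℕ) z)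

variable {P}

lemma Sm_nonneg (hP0 : ∀ z, 0 ≤ P z) (t : ℕ) (w : Fin n → Bool) : 0 ≤ Sm P t w :=
  Finset.sum_nonneg fun z _ => by split <;> simp [hP0]

lemma SmB_nonneg (hP0 : ∀ z, 0 ≤ P z) (t : Fin n) (b : Bool) (w : Fin n → Bool) :
    0 ≤ SmB P t b w :=
  Finset.sum_nonneg fun z _ => by split <;> simp [hP0]

lemma Sm_split (t : Fin n) (w : Fin n → Bool) :
    Sm P (t : ℕ) w = SmB P t true w + SmB P t false w := by
  unfold Sm SmB
  rw [← Finset.sum_add_distrib]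
  refine Finset.sum_congr rfl fun z _ => ?_
  by_cases h : trunc (t : ℕ) z = w <;> cases hz : z t <;> simp [h, hz]

lemma Sm_le_one (hP0 : ∀ z, 0 ≤ P z) (hP1 : ∑ z, P z = 1) (t : ℕ) (w : Fin n → Bool) :
    Sm P t w ≤ 1 := by
  rw [← hP1]
  refine Finset.sum_le_sum fun z _ => ?_
  split <;> simp [hP0]

lemma fiber_split (P : (Fin n → Bool) → ℝ) (t : Fin n) (g : (Fin n → Bool) → Bool → ℝ) :
    ∑ z : Fin n → Bool, P z * g (trunc (t : ℕ) z) (z t)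
      = ∑ w : Fin n → Bool,
          (SmB P t true w * g w true + SmB P t false w * g w false) := by
  have key : ∀ b : Bool, ∑ w : Fin n → Bool, SmB P t b w * g w b
      = ∑ z : Fin n → Bool, if z t = b then P z * g (trunc (t : ℕ) z) b else 0 := by
    intro b
    unfold SmB
    simp only [Finset.sum_mul, ite_mul, zero_mul]
    rw [Finset.sum_comm]
    refine Finset.sum_congr rfl fun z _ => ?_
    simp only [ite_and]
    rw [Finset.sum_ite_eq]
    simp
  rw [Finset.sum_add_distrib, key true, key false, ← Finset.sum_add_distrib]
  refine Finset.sum_congr rfl fun z _ => ?_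
  cases hz : z t <;> simp [hz]

lemma sum_fiber (P : (Fin n → Bool) → ℝ) (t : Fin n) (G : (Fin n → Bool) → ℝ) :
    ∑ z : Fin n → Bool, P z * G (trunc (t : ℕ) z)
      = ∑ w : Fin n → Bool, Sm P (t : ℕ) w * G w := by
  have h := fiber_split P t (fun w _ => G w)
  rw [h]
  refine Finset.sum_congr rfl fun w _ => ?_
  rw [Sm_split]; ring

lemma SmB_eq_zero (t : Fin n) {w : Fin n → Bool} (hw : trunc (t : ℕ) w ≠ w) (b : Bool) :
    SmB P t b w = 0 := by
  refine Finset.sum_eq_zero fun z _ => ?_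
  rw [if_neg]
  rintro ⟨h1, -⟩
  exact hw (by rw [← h1, trunc_idem])

lemma Sm_eq_zero (t : Fin n) {w : Fin n → Bool} (hw : trunc (t : ℕ) w ≠ w) :
    Sm P (t : ℕ) w = 0 := by
  rw [Sm_split t w, SmB_eq_zero t hw, SmB_eq_zero t hw, add_zero]

lemma Sm_succ (t : Fin n) {w : Fin n → Bool} (hw : trunc (t : ℕ) w = w) (b : Bool) :
    Sm P ((t : ℕ) + 1) (Function.update w t b) = SmB P t b w := by
  unfold Sm SmB
  refine Finset.sum_congr rfl fun z _ => ?_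
  have hiff : (trunc ((t : ℕ) + 1) z = Function.update w t b)
      ↔ (trunc (t : ℕ) z = w ∧ z t = b) := by
    rw [trunc_succ]
    constructor
    · intro h
      have hb' : z t = b := by
        have := congrFun h t
        simpa [Function.update_self] using this
      refine ⟨funext fun i => ?_, hb'⟩
      rcases eq_or_ne i t with heq | hne
      · subst heq
        have h1 : trunc (i : ℕ) z i = false := by simp [trunc]
        have h2 : w i = false := by
          conv_lhs => rw [← hw]
          simp [trunc]
        rw [h1, h2]
      · have := congrFun h i
        simpa [Function.update_of_ne hne] using this
    · rintro ⟨h1, h2⟩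
      rw [h1, h2]
  simp only [hiff]

end Seq


section Ent

variable {n : ℕ} (P : (Fin n → Bool) → ℝ)

/-- Entropy of the length-`t` marginal, in expectation form. -/
noncomputable def EntT (t : ℕ) : ℝ :=
  ∑ z : Fin n → Bool, P z * (- Real.log (Sm P t (trunc t z)))

variable {P}

lemma EntT_zero (hP1 : ∑ z, P z = 1) : EntT P 0 = 0 := by
  unfold EntT
  have h0 : ∀ z : Fin n → Bool, Sm P 0 (trunc 0 z) = 1 := by
    intro z
    unfold Sm
    rw [← hP1]
    refine Finset.sum_congr rfl fun z' _ => ?_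
    rw [if_pos]
    funext i; simp [trunc]
  refine Finset.sum_eq_zero fun z _ => by rw [h0 z]; simp

lemma EntT_card : EntT P n = ∑ z : Fin n → Bool, Real.negMulLog (P z) := by
  unfold EntT
  refine Finset.sum_congr rfl fun z _ => ?_
  have hS : Sm P n (trunc n z) = P z := by
    unfold Sm
    rw [trunc_card z]
    rw [Finset.sum_congr rfl fun z' _ => by rw [trunc_card z']]
    simp [Finset.sum_ite_eq']
  rw [hS, Real.negMulLog]; ring

lemma pair_negMulLog {a b : ℝ} (ha : 0 ≤ a) (hb' : 0 ≤ b) :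
    Real.negMulLog a + Real.negMulLog b - Real.negMulLog (a + b)
      = (a + b) * hb (a / (a + b)) := by
  rcases eq_or_lt_of_le (by linarith : (0:ℝ) ≤ a + b) with h | h
  · have ha0 : a = 0 := by linarith
    have hb0 : b = 0 := by linarith
    simp [ha0, hb0, hb]
  · have hs : a + b ≠ 0 := ne_of_gt h
    have e1 : (a + b) * (a / (a + b)) = a := by field_simp
    have e2 : (a + b) * (b / (a + b)) = b := by field_simp
    have h1 : Real.negMulLog a
        = (a / (a + b)) * Real.negMulLog (a + b) + (a + b) * Real.negMulLog (a / (a + b)) := by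
      conv_lhs => rw [← e1]
      exact Real.negMulLog_mul _ _
    have h2 : Real.negMulLog b
        = (b / (a + b)) * Real.negMulLog (a + b) + (a + b) * Real.negMulLog (b / (a + b)) := by
      conv_lhs => rw [← e2]
      exact Real.negMulLog_mul _ _
    have hsum : a / (a + b) + b / (a + b) = 1 := by field_simp
    have e3 : 1 - a / (a + b) = b / (a + b) := by field_simp; ring
    unfold hb
    rw [e3]
    linear_combination h1 + h2 + Real.negMulLog (a + b) * hsum

lemma EntT_step (hP0 : ∀ z, 0 ≤ P z) (t : Fin n) :
    EntT P ((t : ℕ) + 1) - EntT P (t : ℕ)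
      = ∑ z : Fin n → Bool, P z * hb (condP P t z) := by
  have hl1 : EntT P (t : ℕ)
      = ∑ w : Fin n → Bool, Sm P (t : ℕ) w * (- Real.log (Sm P (t : ℕ) w)) := by
    have h := sum_fiber P t (fun w => - Real.log (Sm P (t : ℕ) w))
    simpa [EntT] using h
  have hone : ∀ (b : Bool) (w : Fin n → Bool),
      SmB P t b w * (- Real.log (Sm P ((t : ℕ) + 1) (Function.update w t b)))
        = Real.negMulLog (SmB P t b w) := by
    intro b w
    by_cases hw : trunc (t : ℕ) w = w
    · rw [Sm_succ t hw b, Real.negMulLog]; ring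
    · rw [SmB_eq_zero t hw b]; simp
  have hl2 : EntT P ((t : ℕ) + 1)
      = ∑ w : Fin n → Bool,
          (Real.negMulLog (SmB P t true w) + Real.negMulLog (SmB P t false w)) := by
    unfold EntT
    have step1 : ∑ z : Fin n → Bool, P z * (- Real.log (Sm P ((t : ℕ) + 1) (trunc ((t : ℕ) + 1) z)))
        = ∑ z : Fin n → Bool, P z *
            ((fun w b => - Real.log (Sm P ((t : ℕ) + 1) (Function.update w t b)))
              (trunc (t : ℕ) z) (z t)) := by
      refine Finset.sum_congr rfl fun z _ => ?_
      rw [trunc_succ t z]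
    rw [step1, fiber_split P t (fun w b => - Real.log (Sm P ((t : ℕ) + 1) (Function.update w t b)))]
    refine Finset.sum_congr rfl fun w _ => ?_
    rw [hone true w, hone false w]
  have hr : ∑ z : Fin n → Bool, P z * hb (condP P t z)
      = ∑ w : Fin n → Bool, Sm P (t : ℕ) w * hb (SmB P t true w / Sm P (t : ℕ) w) := by
    have h := sum_fiber P t (fun w => hb (SmB P t true w / Sm P (t : ℕ) w))
    simpa [condP] using h
  rw [hl1, hl2, hr, ← Finset.sum_sub_distrib]
  refine Finset.sum_congr rfl fun w _ => ?_
  have hx : Sm P (t : ℕ) w * (- Real.log (Sm P (t : ℕ) w)) = Real.negMulLog (Sm P (t : ℕ) w) := by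
    rw [Real.negMulLog]; ring
  rw [hx]
  have hT := SmB_nonneg hP0 t true w
  have hF := SmB_nonneg hP0 t false w
  have hps := pair_negMulLog hT hF
  rw [Sm_split t w]
  exact hps

lemma chain_rule (hP0 : ∀ z, 0 ≤ P z) (hP1 : ∑ z, P z = 1) :
    ∑ z : Fin n → Bool, Real.negMulLog (P z)
      = ∑ t : Fin n, ∑ z : Fin n → Bool, P z * hb (condP P t z) := by
  have htel : ∑ t : Fin n, (EntT P ((t : ℕ) + 1) - EntT P (t : ℕ)) = EntT P n - EntT P 0 := by
    rw [Fin.sum_univ_eq_sum_range (fun u => EntT P (u + 1) - EntT P u) n]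
    exact Finset.sum_range_sub (EntT P) n
  calc ∑ z : Fin n → Bool, Real.negMulLog (P z)
      = EntT P n - EntT P 0 := by rw [EntT_card, EntT_zero hP1, sub_zero]
    _ = ∑ t : Fin n, (EntT P ((t : ℕ) + 1) - EntT P (t : ℕ)) := htel.symm
    _ = ∑ t : Fin n, ∑ z : Fin n → Bool, P z * hb (condP P t z) :=
        Finset.sum_congr rfl fun t _ => EntT_step hP0 t

end Ent


section Loss

variable {n : ℕ}

/-- Restriction of a length-`n` sequence to its first `t` coordinates. -/
def resn (t : Fin n) (w : Fin n → Bool) : Fin (t : ℕ) → Bool :=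
  fun i => w ⟨i.1, i.isLt.trans t.isLt⟩

lemma resn_trunc (t : Fin n) (z : Fin n → Bool) : resn t (trunc (t : ℕ) z) = resn t z := by
  funext i
  simp [resn, trunc, i.isLt]

/-- Sequential cumulative loss for predictor family `G`. -/
noncomputable def seqLoss (l : Bool → unitInterval → ℝ)
    (G : ∀ t : ℕ, (Fin t → Bool) → unitInterval) (z : Fin n → Bool) : ℝ :=
  ∑ t : Fin n, l (z t) (G (t : ℕ) (resn t z))

variable {l : Bool → unitInterval → ℝ}

lemma bayes_bddBelow (hl : ∀ b q, 0 ≤ l b q) {p : ℝ} (hp0 : 0 ≤ p) (hp1 : p ≤ 1) :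
    BddBelow (Set.range fun q : unitInterval => (1 - p) * l false q + p * l true q) := by
  refine ⟨0, ?_⟩
  rintro x ⟨q, rfl⟩
  exact add_nonneg (mul_nonneg (by linarith) (hl false q)) (mul_nonneg hp0 (hl true q))

lemma bayesEnv_nonneg (hl : ∀ b q, 0 ≤ l b q) {p : ℝ} (hp0 : 0 ≤ p) (hp1 : p ≤ 1) :
    0 ≤ bayesEnv l p :=
  le_ciInf fun q => add_nonneg (mul_nonneg (by linarith) (hl false q)) (mul_nonneg hp0 (hl true q))

lemma bayesEnv_le (hl : ∀ b q, 0 ≤ l b q) {p : ℝ} (hp0 : 0 ≤ p) (hp1 : p ≤ 1)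
    (q : unitInterval) : bayesEnv l p ≤ (1 - p) * l false q + p * l true q :=
  ciInf_le (bayes_bddBelow hl hp0 hp1) q

variable {P : (Fin n → Bool) → ℝ}

lemma ratio_nonneg (hP0 : ∀ z, 0 ≤ P z) (t : Fin n) (w : Fin n → Bool) :
    0 ≤ SmB P t true w / Sm P (t : ℕ) w :=
  div_nonneg (SmB_nonneg hP0 t true w) (Sm_nonneg hP0 _ w)

lemma ratio_le_one (hP0 : ∀ z, 0 ≤ P z) (t : Fin n) (w : Fin n → Bool) :
    SmB P t true w / Sm P (t : ℕ) w ≤ 1 := by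
  apply div_le_one_of_le₀
  · rw [Sm_split t w]
    linarith [SmB_nonneg hP0 t false w]
  · exact Sm_nonneg hP0 _ w

lemma condP_nonneg (hP0 : ∀ z, 0 ≤ P z) (t : Fin n) (z : Fin n → Bool) :
    0 ≤ condP P t z := ratio_nonneg hP0 t _

lemma condP_le_one (hP0 : ∀ z, 0 ≤ P z) (t : Fin n) (z : Fin n → Bool) :
    condP P t z ≤ 1 := ratio_le_one hP0 t _

lemma sm_mul_bayes_terms (hP0 : ∀ z, 0 ≤ P z) (t : Fin n) (w : Fin n → Bool) (q : unitInterval) :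
    Sm P (t : ℕ) w * ((1 - SmB P t true w / Sm P (t : ℕ) w) * l false q
        + (SmB P t true w / Sm P (t : ℕ) w) * l true q)
      = SmB P t false w * l false q + SmB P t true w * l true q := by
  by_cases hs : Sm P (t : ℕ) w = 0
  · have hT : SmB P t true w = 0 := by
      have := Sm_split (P := P) t w
      have h1 := SmB_nonneg hP0 t true w
      have h2 := SmB_nonneg hP0 t false w
      linarith [hs ▸ this]
    have hF : SmB P t false w = 0 := by
      have := Sm_split (P := P) t w
      have h1 := SmB_nonneg hP0 t true w
      have h2 := SmB_nonneg hP0 t false w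
      linarith [hs ▸ this]
    rw [hs, hT, hF]; ring
  · have h1 : Sm P (t : ℕ) w * (SmB P t true w / Sm P (t : ℕ) w) = SmB P t true w := by
      rw [mul_comm, div_mul_cancel₀ _ hs]
    have h2 : Sm P (t : ℕ) w * (1 - SmB P t true w / Sm P (t : ℕ) w) = SmB P t false w := by
      rw [mul_sub, h1, mul_one]
      have := Sm_split (P := P) t w
      linarith
    calc Sm P (t : ℕ) w * ((1 - SmB P t true w / Sm P (t : ℕ) w) * l false q
            + (SmB P t true w / Sm P (t : ℕ) w) * l true q)
        = (Sm P (t : ℕ) w * (1 - SmB P t true w / Sm P (t : ℕ) w)) * l false q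
            + (Sm P (t : ℕ) w * (SmB P t true w / Sm P (t : ℕ) w)) * l true q := by ring
      _ = SmB P t false w * l false q + SmB P t true w * l true q := by rw [h1, h2]

lemma seq_swap (G : ∀ t : ℕ, (Fin t → Bool) → unitInterval) :
    ∑ z : Fin n → Bool, P z * seqLoss l G z
      = ∑ t : Fin n, ∑ z : Fin n → Bool, P z * l (z t) (G (t : ℕ) (resn t z)) := by
  unfold seqLoss
  simp only [Finset.mul_sum]
  exact Finset.sum_comm

lemma per_t_fiber (t : Fin n) (q : (Fin n → Bool) → unitInterval) :
    ∑ z : Fin n → Bool, P z * l (z t) (q (trunc (t : ℕ) z))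
      = ∑ w : Fin n → Bool,
          (SmB P t true w * l true (q w) + SmB P t false w * l false (q w)) :=
  fiber_split P t (fun w b => l b (q w))

lemma bayes_fiber (t : Fin n) :
    ∑ z : Fin n → Bool, P z * bayesEnv l (condP P t z)
      = ∑ w : Fin n → Bool, Sm P (t : ℕ) w * bayesEnv l (SmB P t true w / Sm P (t : ℕ) w) := by
  have h := sum_fiber P t (fun w => bayesEnv l (SmB P t true w / Sm P (t : ℕ) w))
  simpa [condP] using h

lemma loss_ge (hl : ∀ b q, 0 ≤ l b q) (hP0 : ∀ z, 0 ≤ P z)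
    (G : ∀ t : ℕ, (Fin t → Bool) → unitInterval) :
    (∑ t : Fin n, ∑ z : Fin n → Bool, P z * bayesEnv l (condP P t z))
      ≤ ∑ z : Fin n → Bool, P z * seqLoss l G z := by
  rw [seq_swap G]
  refine Finset.sum_le_sum fun t _ => ?_
  have hres : ∀ z : Fin n → Bool,
      P z * l (z t) (G (t : ℕ) (resn t z))
        = P z * l (z t) ((fun w => G (t : ℕ) (resn t w)) (trunc (t : ℕ) z)) := by
    intro z; simp only [resn_trunc]
  rw [Finset.sum_congr rfl fun z _ => hres z, per_t_fiber t (fun w => G (t : ℕ) (resn t w)),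
    bayes_fiber t]
  refine Finset.sum_le_sum fun w _ => ?_
  have hble := bayesEnv_le hl (ratio_nonneg hP0 t w) (ratio_le_one hP0 t w)
    (G (t : ℕ) (resn t w))
  calc Sm P (t : ℕ) w * bayesEnv l (SmB P t true w / Sm P (t : ℕ) w)
      ≤ Sm P (t : ℕ) w * ((1 - SmB P t true w / Sm P (t : ℕ) w) * l false (G (t : ℕ) (resn t w))
          + (SmB P t true w / Sm P (t : ℕ) w) * l true (G (t : ℕ) (resn t w))) :=
        mul_le_mul_of_nonneg_left hble (Sm_nonneg hP0 _ w)
    _ = SmB P t false w * l false (G (t : ℕ) (resn t w))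
          + SmB P t true w * l true (G (t : ℕ) (resn t w)) := sm_mul_bayes_terms hP0 t w _
    _ = SmB P t true w * l true (G (t : ℕ) (resn t w))
          + SmB P t false w * l false (G (t : ℕ) (resn t w)) := by ring

lemma loss_le (hl : ∀ b q, 0 ≤ l b q) (hP0 : ∀ z, 0 ≤ P z) (hP1 : ∑ z, P z = 1)
    {ε : ℝ} (hε : 0 < ε) :
    ∃ G : ∀ t : ℕ, (Fin t → Bool) → unitInterval,
      ∑ z : Fin n → Bool, P z * seqLoss l G z
        ≤ (∑ t : Fin n, ∑ z : Fin n → Bool, P z * bayesEnv l (condP P t z)) + ε := by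
  classical
  set N : ℝ := (n : ℝ) * 2 ^ n + 1 with hN
  have hNpos : (0 : ℝ) < N := by positivity
  set ε' : ℝ := ε / N with hε'
  have hε'pos : 0 < ε' := div_pos hε hNpos
  have hch : ∀ (t : Fin n) (v : Fin n → Bool), ∃ q : unitInterval,
      (1 - condP P t v) * l false q + condP P t v * l true q
        < bayesEnv l (condP P t v) + ε' := by
    intro t v
    have hlt : bayesEnv l (condP P t v) < bayesEnv l (condP P t v) + ε' := by linarith
    exact exists_lt_of_ciInf_lt hlt
  choose qc hqc using hch
  refine ⟨fun t' => if h : t' < n then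
      (fun w' => qc ⟨t', h⟩ (fun i : Fin n => if h2 : (i : ℕ) < t' then w' ⟨(i : ℕ), h2⟩ else false))
      else fun _ => 1, ?_⟩
  set G : ∀ t' : ℕ, (Fin t' → Bool) → unitInterval := fun t' => if h : t' < n then
      (fun w' => qc ⟨t', h⟩ (fun i : Fin n => if h2 : (i : ℕ) < t' then w' ⟨(i : ℕ), h2⟩ else false))
      else fun _ => 1 with hG
  have hbound : ∀ (t : Fin n) (w : Fin n → Bool),
      SmB P t true w * l true (G (t : ℕ) (resn t w))
          + SmB P t false w * l false (G (t : ℕ) (resn t w))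
        ≤ Sm P (t : ℕ) w * bayesEnv l (SmB P t true w / Sm P (t : ℕ) w) + ε' := by
    intro t w
    by_cases hw : trunc (t : ℕ) w = w
    · -- identify the prediction
      have hGe : G (t : ℕ) (resn t w)
          = qc t (fun i : Fin n => if h2 : (i : ℕ) < (t : ℕ) then resn t w ⟨(i : ℕ), h2⟩ else false) := by
        simp only [hG]
        rw [dif_pos t.isLt]
      set V : Fin n → Bool :=
        fun i : Fin n => if h2 : (i : ℕ) < (t : ℕ) then resn t w ⟨(i : ℕ), h2⟩ else false with hV
      have hVt : trunc (t : ℕ) V = trunc (t : ℕ) w := by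
        funext i
        by_cases hi : (i : ℕ) < (t : ℕ)
        · simp only [trunc, if_pos hi, hV, dif_pos hi, resn]
        · simp only [trunc, if_neg hi]
      have hcond : condP P t V = SmB P t true w / Sm P (t : ℕ) w := by
        unfold condP
        rw [hVt, hw]
      have hq := hqc t V
      rw [hcond] at hq
      have hterms := sm_mul_bayes_terms (l := l) hP0 t w (qc t V)
      have hSnn := Sm_nonneg hP0 (t : ℕ) w
      have hSle1 := Sm_le_one hP0 hP1 (t : ℕ) w
      have hbnn := bayesEnv_nonneg hl (ratio_nonneg hP0 t w) (ratio_le_one hP0 t w)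
      calc SmB P t true w * l true (G (t : ℕ) (resn t w))
            + SmB P t false w * l false (G (t : ℕ) (resn t w))
          = SmB P t false w * l false (qc t V) + SmB P t true w * l true (qc t V) := by
            rw [hGe]; ring
        _ = Sm P (t : ℕ) w * ((1 - SmB P t true w / Sm P (t : ℕ) w) * l false (qc t V)
              + (SmB P t true w / Sm P (t : ℕ) w) * l true (qc t V)) := hterms.symm
        _ ≤ Sm P (t : ℕ) w * (bayesEnv l (SmB P t true w / Sm P (t : ℕ) w) + ε') :=
            mul_le_mul_of_nonneg_left (le_of_lt hq) hSnn
        _ = Sm P (t : ℕ) w * bayesEnv l (SmB P t true w / Sm P (t : ℕ) w)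
              + Sm P (t : ℕ) w * ε' := by ring
        _ ≤ Sm P (t : ℕ) w * bayesEnv l (SmB P t true w / Sm P (t : ℕ) w) + ε' := by
            have : Sm P (t : ℕ) w * ε' ≤ 1 * ε' :=
              mul_le_mul_of_nonneg_right hSle1 (le_of_lt hε'pos)
            linarith
    · have hT := SmB_eq_zero (P := P) t hw true
      have hF := SmB_eq_zero (P := P) t hw false
      have hS := Sm_eq_zero (P := P) t hw
      rw [hT, hF, hS]
      simp [le_of_lt hε'pos]
  -- assemble
  rw [seq_swap G]
  have hstep : ∀ t : Fin n,
      ∑ z : Fin n → Bool, P z * l (z t) (G (t : ℕ) (resn t z))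
        ≤ (∑ z : Fin n → Bool, P z * bayesEnv l (condP P t z)) + 2 ^ n * ε' := by
    intro t
    have hres : ∀ z : Fin n → Bool,
        P z * l (z t) (G (t : ℕ) (resn t z))
          = P z * l (z t) ((fun w => G (t : ℕ) (resn t w)) (trunc (t : ℕ) z)) := by
      intro z; simp only [resn_trunc]
    rw [Finset.sum_congr rfl fun z _ => hres z,
      per_t_fiber t (fun w => G (t : ℕ) (resn t w)), bayes_fiber t]
    calc ∑ w : Fin n → Bool,
            (SmB P t true w * l true (G (t : ℕ) (resn t w))
              + SmB P t false w * l false (G (t : ℕ) (resn t w)))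
        ≤ ∑ w : Fin n → Bool,
            (Sm P (t : ℕ) w * bayesEnv l (SmB P t true w / Sm P (t : ℕ) w) + ε') :=
          Finset.sum_le_sum fun w _ => hbound t w
      _ = (∑ w : Fin n → Bool, Sm P (t : ℕ) w * bayesEnv l (SmB P t true w / Sm P (t : ℕ) w))
            + 2 ^ n * ε' := by
          rw [Finset.sum_add_distrib, Finset.sum_const]
          congr 1
          simp [Fintype.card_fun]
  calc ∑ t : Fin n, ∑ z : Fin n → Bool, P z * l (z t) (G (t : ℕ) (resn t z))
      ≤ ∑ t : Fin n, ((∑ z : Fin n → Bool, P z * bayesEnv l (condP P t z)) + 2 ^ n * ε') :=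
        Finset.sum_le_sum fun t _ => hstep t
    _ = (∑ t : Fin n, ∑ z : Fin n → Bool, P z * bayesEnv l (condP P t z))
          + (n : ℝ) * (2 ^ n * ε') := by
        rw [Finset.sum_add_distrib, Finset.sum_const]
        simp [mul_assoc]
    _ ≤ (∑ t : Fin n, ∑ z : Fin n → Bool, P z * bayesEnv l (condP P t z)) + ε := by
        have hle : (n : ℝ) * (2 ^ n * ε') ≤ ε := by
          rw [hε']
          rw [div_eq_mul_inv]
          have h1 : (n : ℝ) * (2 ^ n * (ε * N⁻¹)) = ((n : ℝ) * 2 ^ n / N) * ε := by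
            field_simp
          rw [h1]
          have h2 : (n : ℝ) * 2 ^ n / N ≤ 1 := by
            rw [div_le_one hNpos, hN]
            linarith
          nlinarith [le_of_lt hε]
        linarith

lemma lossInf_eq (hl : ∀ b q, 0 ≤ l b q) (hP0 : ∀ z, 0 ≤ P z) (hP1 : ∑ z, P z = 1) :
    (⨅ G : ∀ t : ℕ, (Fin t → Bool) → unitInterval, ∑ z : Fin n → Bool, P z * seqLoss l G z)
      = ∑ t : Fin n, ∑ z : Fin n → Bool, P z * bayesEnv l (condP P t z) := by
  have hbdd : BddBelow (Set.range fun G : ∀ t : ℕ, (Fin t → Bool) → unitInterval =>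
      ∑ z : Fin n → Bool, P z * seqLoss l G z) := by
    refine ⟨∑ t : Fin n, ∑ z : Fin n → Bool, P z * bayesEnv l (condP P t z), ?_⟩
    rintro x ⟨G, rfl⟩
    exact loss_ge hl hP0 G
  apply le_antisymm
  · refine le_of_forall_pos_le_add fun ε hε => ?_
    obtain ⟨G, hG⟩ := loss_le hl hP0 hP1 hε
    exact le_trans (ciInf_le hbdd G) hG
  · exact le_ciInf (loss_ge hl hP0)

end Loss


section Key

variable {n : ℕ} {l : Bool → unitInterval → ℝ}

lemma hb_nonneg {p : ℝ} (h0 : 0 ≤ p) (h1 : p ≤ 1) : 0 ≤ hb p :=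
  add_nonneg (Real.negMulLog_nonneg h0 h1)
    (Real.negMulLog_nonneg (by linarith) (by linarith))

lemma negMulLog_le_one_sub {p : ℝ} (h0 : 0 ≤ p) : Real.negMulLog p ≤ 1 - p := by
  rcases eq_or_lt_of_le h0 with h | h
  · simp [← h]
  · have hlog : Real.log p⁻¹ ≤ p⁻¹ - 1 := Real.log_le_sub_one_of_pos (by positivity)
    rw [Real.log_inv] at hlog
    rw [Real.negMulLog]
    calc -p * Real.log p = p * (-Real.log p) := by ring
      _ ≤ p * (p⁻¹ - 1) := mul_le_mul_of_nonneg_left hlog h0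
      _ = 1 - p := by field_simp

lemma hb_le_one {p : ℝ} (h0 : 0 ≤ p) (h1 : p ≤ 1) : hb p ≤ 1 := by
  have a := negMulLog_le_one_sub h0
  have b := negMulLog_le_one_sub (by linarith : (0:ℝ) ≤ 1 - p)
  unfold hb
  linarith

lemma abs_term_le (hl : ∀ b q, 0 ≤ l b q) (α β : ℝ) {p : ℝ} (h0 : 0 ≤ p) (h1 : p ≤ 1) :
    |α * hb p + β - bayesEnv l p| ≤ |α| + |β| + (l false 1 + l true 1) := by
  have hbp0 := hb_nonneg h0 h1
  have hbp1 := hb_le_one h0 h1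
  have hbe0 := bayesEnv_nonneg hl h0 h1
  have hbe1 : bayesEnv l p ≤ l false 1 + l true 1 := by
    refine le_trans (bayesEnv_le hl h0 h1 1) ?_
    nlinarith [hl false (1 : unitInterval), hl true (1 : unitInterval)]
  have h2 : |α * hb p| ≤ |α| := by
    rw [abs_mul]
    calc |α| * |hb p| ≤ |α| * 1 := by
          refine mul_le_mul_of_nonneg_left ?_ (abs_nonneg α)
          rw [abs_of_nonneg hbp0]; exact hbp1
      _ = |α| := mul_one _
  have t1 := abs_add_le (α * hb p + β) (-(bayesEnv l p))
  rw [abs_neg] at t1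
  have t2 := abs_add_le (α * hb p) β
  have heq : α * hb p + β - bayesEnv l p = α * hb p + β + -bayesEnv l p := by ring
  rw [heq]
  rw [abs_of_nonneg hbe0] at *
  calc |α * hb p + β + -bayesEnv l p| ≤ |α * hb p + β| + bayesEnv l p := t1
    _ ≤ |α * hb p| + |β| + bayesEnv l p := by linarith
    _ ≤ |α| + |β| + (l false 1 + l true 1) := by linarith

lemma epsF_bdd (hl : ∀ b q, 0 ≤ l b q) (α β : ℝ) :
    BddAbove (Set.range fun p : unitInterval => |α * hb (p : ℝ) + β - bayesEnv l (p : ℝ)|) := by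
  refine ⟨|α| + |β| + (l false 1 + l true 1), ?_⟩
  rintro x ⟨p, rfl⟩
  exact abs_term_le hl α β p.2.1 p.2.2

lemma le_epsF (hl : ∀ b q, 0 ≤ l b q) (α β : ℝ) {p : ℝ} (h0 : 0 ≤ p) (h1 : p ≤ 1) :
    |α * hb p + β - bayesEnv l p| ≤ epsF l α β :=
  le_ciSup (epsF_bdd hl α β) (⟨p, h0, h1⟩ : unitInterval)

lemma key_bound (hl : ∀ b q, 0 ≤ l b q) (P : (Fin n → Bool) → ℝ)
    (hP0 : ∀ z, 0 ≤ P z) (hP1 : ∑ z, P z = 1) (α β : ℝ) :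
    |(⨅ G : ∀ t : ℕ, (Fin t → Bool) → unitInterval, ∑ z : Fin n → Bool, P z * seqLoss l G z)
      - (α * (∑ z : Fin n → Bool, Real.negMulLog (P z)) + (n : ℝ) * β)|
      ≤ (n : ℝ) * epsF l α β := by
  rw [lossInf_eq hl hP0 hP1, chain_rule hP0 hP1]
  have hβ1 : ∀ _t : Fin n, ∑ z : Fin n → Bool, P z * β = β := by
    intro t
    rw [← Finset.sum_mul, hP1, one_mul]
  have hβ : (n : ℝ) * β = ∑ t : Fin n, ∑ z : Fin n → Bool, P z * β := by
    rw [Finset.sum_congr rfl fun t _ => hβ1 t]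
    simp [mul_comm]
  rw [hβ, Finset.mul_sum]
  have hcomb : (∑ t : Fin n, ∑ z : Fin n → Bool, P z * bayesEnv l (condP P t z))
      - (∑ t : Fin n, α * ∑ z : Fin n → Bool, P z * hb (condP P t z)
          + ∑ t : Fin n, ∑ z : Fin n → Bool, P z * β)
      = ∑ t : Fin n, ∑ z : Fin n → Bool,
          P z * (bayesEnv l (condP P t z) - α * hb (condP P t z) - β) := by
    rw [← Finset.sum_add_distrib, ← Finset.sum_sub_distrib]
    refine Finset.sum_congr rfl fun t _ => ?_
    rw [Finset.mul_sum, ← Finset.sum_add_distrib, ← Finset.sum_sub_distrib]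
    exact Finset.sum_congr rfl fun z _ => by ring
  rw [hcomb]
  calc |∑ t : Fin n, ∑ z : Fin n → Bool,
          P z * (bayesEnv l (condP P t z) - α * hb (condP P t z) - β)|
      ≤ ∑ t : Fin n, |∑ z : Fin n → Bool,
          P z * (bayesEnv l (condP P t z) - α * hb (condP P t z) - β)| :=
        Finset.abs_sum_le_sum_abs _ _
    _ ≤ ∑ t : Fin n, ∑ z : Fin n → Bool,
          |P z * (bayesEnv l (condP P t z) - α * hb (condP P t z) - β)| :=
        Finset.sum_le_sum fun t _ => Finset.abs_sum_le_sum_abs _ _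
    _ ≤ ∑ t : Fin n, ∑ z : Fin n → Bool, P z * epsF l α β := by
        refine Finset.sum_le_sum fun t _ => Finset.sum_le_sum fun z _ => ?_
        rw [abs_mul, abs_of_nonneg (hP0 z)]
        refine mul_le_mul_of_nonneg_left ?_ (hP0 z)
        have habs : |bayesEnv l (condP P t z) - α * hb (condP P t z) - β|
            = |α * hb (condP P t z) + β - bayesEnv l (condP P t z)| := by
          rw [← abs_neg]; congr 1; ring
        rw [habs]
        exact le_epsF hl α β (condP_nonneg hP0 t z) (condP_le_one hP0 t z)
    _ = (n : ℝ) * epsF l α β := by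
        rw [Finset.sum_congr rfl fun t (_ : t ∈ Finset.univ) => by
          rw [← Finset.sum_mul, hP1, one_mul]]
        simp [mul_comm]

end Key


section Scan

variable {B : Type*} [Fintype B] [DecidableEq B]

/-- The bit read at time `t` by scan `Ψ` on field `x`. -/
def seqX (Ψ : ∀ t : ℕ, (Fin t → Bool) → B) (x : B → Bool) (t : ℕ) : Bool :=
  x (visits Ψ x t)

lemma visits_eq' (Ψ : ∀ t : ℕ, (Fin t → Bool) → B) (x : B → Bool) (t : ℕ) :
    visits Ψ x t = Ψ t fun i : Fin t => seqX Ψ x i.1 := by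
  rw [visits]; rfl

lemma visits_congr (Ψ : ∀ t : ℕ, (Fin t → Bool) → B) {x x' : B → Bool} {t : ℕ}
    (h : ∀ i, i < t → seqX Ψ x i = seqX Ψ x' i) :
    visits Ψ x t = visits Ψ x' t := by
  rw [visits_eq', visits_eq']
  congr 1
  funext i
  exact h i.1 i.isLt

lemma scan_bijective (Ψ : ∀ t : ℕ, (Fin t → Bool) → B) (hΨ : IsValidScan Ψ) :
    Function.Bijective
      (fun (x : B → Bool) => fun t : Fin (Fintype.card B) => seqX Ψ x t.1) := by
  constructor
  · intro x x' h
    have hseq : ∀ i, i < Fintype.card B → seqX Ψ x i = seqX Ψ x' i :=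
      fun i hi => congrFun h ⟨i, hi⟩
    funext b
    obtain ⟨t, ht⟩ := (hΨ x).2 b
    have ht' : visits Ψ x t.1 = b := ht
    have hv : visits Ψ x t.1 = visits Ψ x' t.1 :=
      visits_congr Ψ fun i hi => hseq i (hi.trans t.isLt)
    calc x b = x (visits Ψ x t.1) := by rw [ht']
      _ = seqX Ψ x t.1 := rfl
      _ = seqX Ψ x' t.1 := hseq t.1 t.isLt
      _ = x' (visits Ψ x t.1) := by rw [show seqX Ψ x' t.1 = x' (visits Ψ x' t.1) from rfl, hv]
      _ = x' b := by rw [ht']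
  · intro z
    classical
    set zb : ℕ → Bool := fun i => if h : i < Fintype.card B then z ⟨i, h⟩ else false with hzb
    set s : ℕ → B := fun t => Ψ t fun i : Fin t => zb i.1 with hs
    set x : B → Bool :=
      fun b => if h : ∃ t, t < Fintype.card B ∧ s t = b then zb (Nat.find h) else false with hx
    have main : ∀ t, t < Fintype.card B → visits Ψ x t = s t ∧ seqX Ψ x t = zb t := by
      intro t
      induction t using Nat.strong_induction_on with
      | _ t IH =>
        intro htn
        have hv : visits Ψ x t = s t := by
          rw [visits_eq', hs]
          congr 1
          funext i
          exact (IH i.1 i.isLt (i.isLt.trans htn)).2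
        refine ⟨hv, ?_⟩
        show x (visits Ψ x t) = zb t
        rw [hv]
        have hex : ∃ t', t' < Fintype.card B ∧ s t' = s t := ⟨t, htn, rfl⟩
        have hxe : x (s t) = zb (Nat.find hex) := by
          rw [hx]
          exact dif_pos hex
        rw [hxe]
        have hspec := Nat.find_spec hex
        have hle : Nat.find hex ≤ t := Nat.find_min' hex ⟨htn, rfl⟩
        rcases lt_or_eq_of_le hle with hlt | heq
        · exfalso
          have h1 : visits Ψ x (Nat.find hex) = s (Nat.find hex) := (IH _ hlt hspec.1).1
          have h2 : (fun u : Fin (Fintype.card B) => visits Ψ x u.1) ⟨Nat.find hex, hspec.1⟩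
              = (fun u : Fin (Fintype.card B) => visits Ψ x u.1) ⟨t, htn⟩ := by
            simp only
            rw [h1, hspec.2, hv]
          have h3 := (hΨ x).1 h2
          have h4 : Nat.find hex = t := congrArg Fin.val h3
          exact absurd h4 (ne_of_lt hlt)
        · rw [heq]
    refine ⟨x, ?_⟩
    funext t
    show seqX Ψ x t.1 = z t
    rw [(main t.1 t.isLt).2, hzb]
    simp [t.isLt]

/-- The equivalence between binary fields on `B` and bit sequences induced by a valid scan. -/
noncomputable def scanEquiv (Ψ : ∀ t : ℕ, (Fin t → Bool) → B) (hΨ : IsValidScan Ψ) :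
    (B → Bool) ≃ (Fin (Fintype.card B) → Bool) :=
  Equiv.ofBijective _ (scan_bijective Ψ hΨ)

lemma cumLoss_eq_seqLoss (l : Bool → unitInterval → ℝ) (Ψ : ∀ t : ℕ, (Fin t → Bool) → B)
    (hΨ : IsValidScan Ψ) (F : ∀ t : ℕ, (Fin t → Bool) → unitInterval) (x : B → Bool) :
    cumLoss l Ψ F x = seqLoss l F (scanEquiv Ψ hΨ x) :=
  rfl

lemma optScanLoss_eq (l : Bool → unitInterval → ℝ) (Q : (B → Bool) → ℝ)
    (Ψ : ∀ t : ℕ, (Fin t → Bool) → B) (hΨ : IsValidScan Ψ) :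
    optScanLoss l Q Ψ
      = ⨅ F : ∀ t : ℕ, (Fin t → Bool) → unitInterval,
          ∑ z : Fin (Fintype.card B) → Bool,
            Q ((scanEquiv Ψ hΨ).symm z) * seqLoss l F z := by
  unfold optScanLoss
  refine iInf_congr fun F => ?_
  rw [← Equiv.sum_comp (scanEquiv Ψ hΨ)
    (fun z => Q ((scanEquiv Ψ hΨ).symm z) * seqLoss l F z)]
  refine Finset.sum_congr rfl fun x _ => ?_
  rw [Equiv.symm_apply_apply, cumLoss_eq_seqLoss l Ψ hΨ F x]

end Scan


theorem statement13 {B : Type*} [Fintype B] [DecidableEq B] (hB : 0 < Fintype.card B)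
    (l : Bool → unitInterval → ℝ) (hl : ∀ b q, 0 ≤ l b q)
    (Q : (B → Bool) → ℝ) (hQ0 : ∀ x, 0 ≤ Q x) (hQ1 : ∑ x, Q x = 1)
    (Ψ : ∀ t : ℕ, (Fin t → Bool) → B) (hΨ : IsValidScan Ψ) :
    |optScanLoss l Q Ψ / Fintype.card B - scandQ l Q| ≤ 2 * epsL l := by
  classical
  have hn : (0 : ℝ) < (Fintype.card B : ℝ) := by exact_mod_cast hB
  -- uniform bound for every valid scan
  have key2 : ∀ (Ψ' : ∀ t : ℕ, (Fin t → Bool) → B), IsValidScan Ψ' → ∀ α β : ℝ,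
      |optScanLoss l Q Ψ' - (α * entQ Q + (Fintype.card B : ℝ) * β)|
        ≤ (Fintype.card B : ℝ) * epsF l α β := by
    intro Ψ' hΨ' α β
    set P : (Fin (Fintype.card B) → Bool) → ℝ := fun z => Q ((scanEquiv Ψ' hΨ').symm z) with hP
    have hP0 : ∀ z, 0 ≤ P z := fun z => hQ0 _
    have hP1 : ∑ z, P z = 1 := by
      rw [hP]
      rw [Equiv.sum_comp (scanEquiv Ψ' hΨ').symm Q]
      exact hQ1
    have hent : ∑ z : Fin (Fintype.card B) → Bool, Real.negMulLog (P z) = entQ Q := by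
      rw [hP]
      exact Equiv.sum_comp (scanEquiv Ψ' hΨ').symm fun x => Real.negMulLog (Q x)
    rw [optScanLoss_eq l Q Ψ' hΨ', ← hent]
    exact key_bound hl P hP0 hP1 α β
  have hne : Nonempty {Ψ' : ∀ t : ℕ, (Fin t → Bool) → B // IsValidScan Ψ'} := ⟨⟨Ψ, hΨ⟩⟩
  have habs : ∀ α β : ℝ,
      |optScanLoss l Q Ψ / (Fintype.card B : ℝ) - scandQ l Q| ≤ 2 * epsF l α β := by
    intro α β
    have hεnn : 0 ≤ epsF l α β := by
      have h1 := key2 Ψ hΨ α β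
      have h2 := abs_nonneg (optScanLoss l Q Ψ - (α * entQ Q + (Fintype.card B : ℝ) * β))
      nlinarith
    have hdiv : ∀ (Ψ' : ∀ t : ℕ, (Fin t → Bool) → B), IsValidScan Ψ' →
        |optScanLoss l Q Ψ' / (Fintype.card B : ℝ)
          - (α * entQ Q + (Fintype.card B : ℝ) * β) / (Fintype.card B : ℝ)| ≤ epsF l α β := by
      intro Ψ' hΨ'
      rw [div_sub_div_same, abs_div, abs_of_pos hn, div_le_iff₀ hn]
      exact le_of_le_of_eq (key2 Ψ' hΨ' α β) (mul_comm _ _)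
    have h1 : ∀ Ψ' : {Ψ' : ∀ t : ℕ, (Fin t → Bool) → B // IsValidScan Ψ'},
        (α * entQ Q + (Fintype.card B : ℝ) * β) / (Fintype.card B : ℝ) - epsF l α β
          ≤ optScanLoss l Q Ψ'.1 / (Fintype.card B : ℝ) := by
      intro Ψ'
      have := (abs_le.1 (hdiv Ψ'.1 Ψ'.2)).1
      linarith
    have hlb : (α * entQ Q + (Fintype.card B : ℝ) * β) / (Fintype.card B : ℝ) - epsF l α β
        ≤ scandQ l Q := le_ciInf h1
    have hub : scandQ l Q ≤ optScanLoss l Q Ψ / (Fintype.card B : ℝ) := by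
      refine ciInf_le ⟨(α * entQ Q + (Fintype.card B : ℝ) * β) / (Fintype.card B : ℝ)
        - epsF l α β, ?_⟩ (⟨Ψ, hΨ⟩ : {Ψ' : ∀ t : ℕ, (Fin t → Bool) → B // IsValidScan Ψ'})
      rintro x ⟨Ψ', rfl⟩
      exact h1 Ψ'
    have hme := abs_le.1 (hdiv Ψ hΨ)
    rw [abs_le]
    constructor
    · linarith [hme.1]
    · linarith [hme.2]
  have h2 : |optScanLoss l Q Ψ / (Fintype.card B : ℝ) - scandQ l Q| / 2 ≤ epsL l := by
    refine le_ciInf fun ab => ?_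
    have := habs ab.1 ab.2
    linarith
  linarith [h2]


end Scandiction
end
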